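/- The polynomial f(a) = a^12 − 2a^11 + 9a^10 − 20a^9 + 38a^8 − 73a^7 + 101a^6 − 86a^5 + 55a^4 − 46a^3 + 42a^2 − 24a + 6 is irreducible over ℚ. -/
import Mathlib


open Polynomial


instance : Fact (Nat.Prime 13) := ⟨by norm_num⟩

private noncomputable def q13 : (ZMod 13)[X] :=
  X ^ 11 + 5 * X ^ 10 + 5 * X ^ 9 + 2 * X ^ 8 + 5 * X ^ 6 + 6 * X ^ 5 +
    8 * X ^ 4 + 7 * X ^ 3 + 3 * X ^ 2 + 11 * X + 1

private lemma q13_monic : q13.Monic := by unfold q13; monicity!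

private lemma q13_natDegree : q13.natDegree = 11 := by unfold q13; compute_degree!

private lemma q13_ne_zero : q13 ≠ 0 := q13_monic.ne_zero

private lemma q13_no_root (r : ZMod 13) : q13.eval r ≠ 0 := by
  have key : ∀ s : ZMod 13, s ^ 11 + 5 * s ^ 10 + 5 * s ^ 9 + 2 * s ^ 8 + 5 * s ^ 6 + 6 * s ^ 5 +
      8 * s ^ 4 + 7 * s ^ 3 + 3 * s ^ 2 + 11 * s + 1 ≠ 0 := by decide
  have h : q13.eval r = r ^ 11 + 5 * r ^ 10 + 5 * r ^ 9 + 2 * r ^ 8 + 5 * r ^ 6 + 6 * r ^ 5 +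
      8 * r ^ 4 + 7 * r ^ 3 + 3 * r ^ 2 + 11 * r + 1 := by
    simp only [q13, eval_add, eval_mul, eval_pow, eval_X, eval_ofNat, eval_one]
  rw [h]; exact key r
set_option maxHeartbeats 1600000 in
private lemma q13chain_0
    (h0 : (AdjoinRoot.root q13) ^ (1:ℕ) = (aeval (AdjoinRoot.root q13)) (X : ℤ[X])) :
    (AdjoinRoot.root q13) ^ (104:ℕ) = (aeval (AdjoinRoot.root q13)) ((12) * X ^ 10 + (10) * X ^ 9 + (8) * X ^ 8 + X ^ 7 + (2) * X ^ 6 + (4) * X ^ 5 + (4) * X ^ 4 + (9) * X ^ 3 + (11) * X ^ 2 + (4) * X + (2) : ℤ[X]) := by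
  have hq0 : (aeval (AdjoinRoot.root q13)) (X ^ 11 + (5) * X ^ 10 + (5) * X ^ 9 + (2) * X ^ 8 + (5) * X ^ 6 + (6) * X ^ 5 + (8) * X ^ 4 + (7) * X ^ 3 + (3) * X ^ 2 + (11) * X + (1) : ℤ[X]) = 0 := by
    have h1 : (X ^ 11 + (5) * X ^ 10 + (5) * X ^ 9 + (2) * X ^ 8 + (5) * X ^ 6 + (6) * X ^ 5 + (8) * X ^ 4 + (7) * X ^ 3 + (3) * X ^ 2 + (11) * X + (1) : ℤ[X]).map (algebraMap ℤ (ZMod 13)) = q13 := by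
      simp only [q13, Polynomial.map_add, Polynomial.map_mul, Polynomial.map_pow,
        Polynomial.map_ofNat, Polynomial.map_X, Polynomial.map_one]
    rw [← aeval_map_algebraMap (ZMod 13), h1, AdjoinRoot.aeval_eq, AdjoinRoot.mk_self]
  have h13a : (aeval (AdjoinRoot.root q13)) ((13 : ℤ[X])) = 0 := by
    have hz : ((13:ℕ) : AdjoinRoot q13) = 0 := by
      rw [← map_natCast (algebraMap (ZMod 13) (AdjoinRoot q13)) 13,
        show ((13:ℕ) : ZMod 13) = 0 from by decide, map_zero]
    rw [map_ofNat]; exact_mod_cast hz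
  have red : ∀ a b c s : ℤ[X], a = c * (X ^ 11 + (5) * X ^ 10 + (5) * X ^ 9 + (2) * X ^ 8 + (5) * X ^ 6 + (6) * X ^ 5 + (8) * X ^ 4 + (7) * X ^ 3 + (3) * X ^ 2 + (11) * X + (1)) + 13 * s + b → (aeval (AdjoinRoot.root q13)) a = (aeval (AdjoinRoot.root q13)) b := by
    intro a b c s hcert
    rw [hcert, map_add, map_add, map_mul, map_mul, hq0, h13a, mul_zero, zero_mul, add_zero, zero_add]
  have h1 : (AdjoinRoot.root q13) ^ (2:ℕ) = (aeval (AdjoinRoot.root q13)) (X ^ 2 : ℤ[X]) :=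
    (show (AdjoinRoot.root q13) ^ (2:ℕ) = (aeval (AdjoinRoot.root q13)) ((X) ^ 2 : ℤ[X]) by
        rw [show (AdjoinRoot.root q13) ^ (2:ℕ) = ((AdjoinRoot.root q13) ^ (1:ℕ)) ^ 2 from pow_mul (AdjoinRoot.root q13) 1 2, h0, ← map_pow]).trans
      (red _ _ ((0)) ((0)) (by ring))
  have h2 : (AdjoinRoot.root q13) ^ (3:ℕ) = (aeval (AdjoinRoot.root q13)) (X ^ 3 : ℤ[X]) :=
    (show (AdjoinRoot.root q13) ^ (3:ℕ) = (aeval (AdjoinRoot.root q13)) ((X ^ 2) * X : ℤ[X]) by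
        rw [show (AdjoinRoot.root q13) ^ (3:ℕ) = (AdjoinRoot.root q13) ^ (2:ℕ) * (AdjoinRoot.root q13) from pow_succ (AdjoinRoot.root q13) 2, h1, map_mul, aeval_X]).trans
      (red _ _ ((0)) ((0)) (by ring))
  have h3 : (AdjoinRoot.root q13) ^ (6:ℕ) = (aeval (AdjoinRoot.root q13)) (X ^ 6 : ℤ[X]) :=
    (show (AdjoinRoot.root q13) ^ (6:ℕ) = (aeval (AdjoinRoot.root q13)) ((X ^ 3) ^ 2 : ℤ[X]) by
        rw [show (AdjoinRoot.root q13) ^ (6:ℕ) = ((AdjoinRoot.root q13) ^ (3:ℕ)) ^ 2 from pow_mul (AdjoinRoot.root q13) 3 2, h2, ← map_pow]).trans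
      (red _ _ ((0)) ((0)) (by ring))
  have h4 : (AdjoinRoot.root q13) ^ (12:ℕ) = (aeval (AdjoinRoot.root q13)) ((7) * X ^ 10 + (10) * X ^ 9 + (10) * X ^ 8 + (8) * X ^ 7 + (6) * X ^ 6 + (9) * X ^ 5 + (7) * X ^ 4 + (6) * X ^ 3 + (4) * X ^ 2 + (2) * X + (5) : ℤ[X]) :=
    (show (AdjoinRoot.root q13) ^ (12:ℕ) = (aeval (AdjoinRoot.root q13)) ((X ^ 6) ^ 2 : ℤ[X]) by
        rw [show (AdjoinRoot.root q13) ^ (12:ℕ) = ((AdjoinRoot.root q13) ^ (6:ℕ)) ^ 2 from pow_mul (AdjoinRoot.root q13) 6 2, h3, ← map_pow]).trans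
      (red _ _ (X + (-5)) (X ^ 10 + X ^ 9 + (-1) * X ^ 7 + X ^ 6 + X ^ 5 + (2) * X ^ 4 + (2) * X ^ 3 + (4) * X) (by ring))
  have h5 : (AdjoinRoot.root q13) ^ (13:ℕ) = (aeval (AdjoinRoot.root q13)) (X ^ 10 + X ^ 9 + (7) * X ^ 8 + (6) * X ^ 7 + (4) * X ^ 5 + (2) * X ^ 4 + (7) * X ^ 3 + (7) * X ^ 2 + (6) * X + (6) : ℤ[X]) :=
    (show (AdjoinRoot.root q13) ^ (13:ℕ) = (aeval (AdjoinRoot.root q13)) (((7) * X ^ 10 + (10) * X ^ 9 + (10) * X ^ 8 + (8) * X ^ 7 + (6) * X ^ 6 + (9) * X ^ 5 + (7) * X ^ 4 + (6) * X ^ 3 + (4) * X ^ 2 + (2) * X + (5)) * X : ℤ[X]) by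
        rw [show (AdjoinRoot.root q13) ^ (13:ℕ) = (AdjoinRoot.root q13) ^ (12:ℕ) * (AdjoinRoot.root q13) from pow_succ (AdjoinRoot.root q13) 12, h4, map_mul, aeval_X]).trans
      (red _ _ ((7)) ((-2) * X ^ 10 + (-2) * X ^ 9 + (-1) * X ^ 8 + (-2) * X ^ 6 + (-3) * X ^ 5 + (-4) * X ^ 4 + (-4) * X ^ 3 + (-2) * X ^ 2 + (-6) * X + (-1)) (by ring))
  have h6 : (AdjoinRoot.root q13) ^ (26:ℕ) = (aeval (AdjoinRoot.root q13)) ((9) * X ^ 10 + (8) * X ^ 9 + (12) * X ^ 8 + (8) * X ^ 7 + (7) * X ^ 6 + (11) * X ^ 5 + (10) * X ^ 4 + (7) * X ^ 3 + (6) * X ^ 2 + (8) * X + (7) : ℤ[X]) :=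
    (show (AdjoinRoot.root q13) ^ (26:ℕ) = (aeval (AdjoinRoot.root q13)) ((X ^ 10 + X ^ 9 + (7) * X ^ 8 + (6) * X ^ 7 + (4) * X ^ 5 + (2) * X ^ 4 + (7) * X ^ 3 + (7) * X ^ 2 + (6) * X + (6)) ^ 2 : ℤ[X]) by
        rw [show (AdjoinRoot.root q13) ^ (26:ℕ) = ((AdjoinRoot.root q13) ^ (13:ℕ)) ^ 2 from pow_mul (AdjoinRoot.root q13) 13 2, h5, ← map_pow]).trans
      (red _ _ (X ^ 9 + (-3) * X ^ 8 + (25) * X ^ 7 + (-86) * X ^ 6 + (372) * X ^ 5 + (-1393) * X ^ 4 + (5334) * X ^ 3 + (-20490) * X ^ 2 + (78967) * X + (-304431)) ((90289) * X ^ 10 + (103360) * X ^ 9 + (52926) * X ^ 8 + (-23451) * X ^ 7 + (90402) * X ^ 6 + (102876) * X ^ 5 + (145155) * X ^ 4 + (162641) * X ^ 3 + (5020) * X ^ 2 + (251526) * X + (23420)) (by ring))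
  have h7 : (AdjoinRoot.root q13) ^ (52:ℕ) = (aeval (AdjoinRoot.root q13)) ((6) * X ^ 10 + (9) * X ^ 9 + (11) * X ^ 8 + (9) * X ^ 7 + (3) * X ^ 6 + (2) * X ^ 5 + X ^ 4 + (3) * X ^ 2 + (2) * X + (8) : ℤ[X]) :=
    (show (AdjoinRoot.root q13) ^ (52:ℕ) = (aeval (AdjoinRoot.root q13)) (((9) * X ^ 10 + (8) * X ^ 9 + (12) * X ^ 8 + (8) * X ^ 7 + (7) * X ^ 6 + (11) * X ^ 5 + (10) * X ^ 4 + (7) * X ^ 3 + (6) * X ^ 2 + (8) * X + (7)) ^ 2 : ℤ[X]) by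
        rw [show (AdjoinRoot.root q13) ^ (52:ℕ) = ((AdjoinRoot.root q13) ^ (26:ℕ)) ^ 2 from pow_mul (AdjoinRoot.root q13) 26 2, h6, ← map_pow]).trans
      (red _ _ ((81) * X ^ 9 + (-261) * X ^ 8 + (1180) * X ^ 7 + (-4421) * X ^ 6 + (17125) * X ^ 5 + (-65783) * X ^ 4 + (253539) * X ^ 3 + (-977350) * X ^ 2 + (3767852) * X + (-14525821)) ((4307575) * X ^ 10 + (4931870) * X ^ 9 + (2524978) * X ^ 8 + (-1118956) * X ^ 7 + (4313835) * X ^ 6 + (4907679) * X ^ 5 + (6926215) * X ^ 4 + (7759592) * X ^ 3 + (239122) * X ^ 2 + (12001253) * X + (1117374)) (by ring))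
  have h8 : (AdjoinRoot.root q13) ^ (104:ℕ) = (aeval (AdjoinRoot.root q13)) ((12) * X ^ 10 + (10) * X ^ 9 + (8) * X ^ 8 + X ^ 7 + (2) * X ^ 6 + (4) * X ^ 5 + (4) * X ^ 4 + (9) * X ^ 3 + (11) * X ^ 2 + (4) * X + (2) : ℤ[X]) :=
    (show (AdjoinRoot.root q13) ^ (104:ℕ) = (aeval (AdjoinRoot.root q13)) (((6) * X ^ 10 + (9) * X ^ 9 + (11) * X ^ 8 + (9) * X ^ 7 + (3) * X ^ 6 + (2) * X ^ 5 + X ^ 4 + (3) * X ^ 2 + (2) * X + (8)) ^ 2 : ℤ[X]) by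
        rw [show (AdjoinRoot.root q13) ^ (104:ℕ) = ((AdjoinRoot.root q13) ^ (52:ℕ)) ^ 2 from pow_mul (AdjoinRoot.root q13) 52 2, h7, ← map_pow]).trans
      (red _ _ ((36) * X ^ 9 + (-72) * X ^ 8 + (393) * X ^ 7 + (-1371) * X ^ 6 + (5353) * X ^ 5 + (-20600) * X ^ 4 + (79316) * X ^ 3 + (-305991) * X ^ 2 + (1179499) * X + (-4547351)) ((1348489) * X ^ 10 + (1543951) * X ^ 9 + (790475) * X ^ 8 + (-350237) * X ^ 7 + (1350525) * X ^ 6 + (1536414) * X ^ 5 + (2168341) * X ^ 4 + (2429196) * X ^ 3 + (74892) * X ^ 2 + (3757030) * X + (349801)) (by ring))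
  exact h8

set_option maxHeartbeats 1600000 in
private lemma q13chain_1
    (h0 : (AdjoinRoot.root q13) ^ (104:ℕ) = (aeval (AdjoinRoot.root q13)) ((12) * X ^ 10 + (10) * X ^ 9 + (8) * X ^ 8 + X ^ 7 + (2) * X ^ 6 + (4) * X ^ 5 + (4) * X ^ 4 + (9) * X ^ 3 + (11) * X ^ 2 + (4) * X + (2) : ℤ[X])) :
    (AdjoinRoot.root q13) ^ (6676:ℕ) = (aeval (AdjoinRoot.root q13)) (X ^ 10 + (2) * X ^ 9 + (9) * X ^ 8 + (9) * X ^ 7 + (9) * X ^ 6 + (3) * X ^ 5 + (7) * X ^ 4 + (4) * X ^ 3 + (6) * X ^ 2 + X + (2) : ℤ[X]) := by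
  have hq0 : (aeval (AdjoinRoot.root q13)) (X ^ 11 + (5) * X ^ 10 + (5) * X ^ 9 + (2) * X ^ 8 + (5) * X ^ 6 + (6) * X ^ 5 + (8) * X ^ 4 + (7) * X ^ 3 + (3) * X ^ 2 + (11) * X + (1) : ℤ[X]) = 0 := by
    have h1 : (X ^ 11 + (5) * X ^ 10 + (5) * X ^ 9 + (2) * X ^ 8 + (5) * X ^ 6 + (6) * X ^ 5 + (8) * X ^ 4 + (7) * X ^ 3 + (3) * X ^ 2 + (11) * X + (1) : ℤ[X]).map (algebraMap ℤ (ZMod 13)) = q13 := by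
      simp only [q13, Polynomial.map_add, Polynomial.map_mul, Polynomial.map_pow,
        Polynomial.map_ofNat, Polynomial.map_X, Polynomial.map_one]
    rw [← aeval_map_algebraMap (ZMod 13), h1, AdjoinRoot.aeval_eq, AdjoinRoot.mk_self]
  have h13a : (aeval (AdjoinRoot.root q13)) ((13 : ℤ[X])) = 0 := by
    have hz : ((13:ℕ) : AdjoinRoot q13) = 0 := by
      rw [← map_natCast (algebraMap (ZMod 13) (AdjoinRoot q13)) 13,
        show ((13:ℕ) : ZMod 13) = 0 from by decide, map_zero]
    rw [map_ofNat]; exact_mod_cast hz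
  have red : ∀ a b c s : ℤ[X], a = c * (X ^ 11 + (5) * X ^ 10 + (5) * X ^ 9 + (2) * X ^ 8 + (5) * X ^ 6 + (6) * X ^ 5 + (8) * X ^ 4 + (7) * X ^ 3 + (3) * X ^ 2 + (11) * X + (1)) + 13 * s + b → (aeval (AdjoinRoot.root q13)) a = (aeval (AdjoinRoot.root q13)) b := by
    intro a b c s hcert
    rw [hcert, map_add, map_add, map_mul, map_mul, hq0, h13a, mul_zero, zero_mul, add_zero, zero_add]
  have h1 : (AdjoinRoot.root q13) ^ (208:ℕ) = (aeval (AdjoinRoot.root q13)) ((7) * X ^ 10 + (8) * X ^ 9 + (11) * X ^ 8 + (10) * X ^ 7 + X ^ 6 + (12) * X ^ 4 + (9) * X ^ 2 + (10) * X + (6) : ℤ[X]) :=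
    (show (AdjoinRoot.root q13) ^ (208:ℕ) = (aeval (AdjoinRoot.root q13)) (((12) * X ^ 10 + (10) * X ^ 9 + (8) * X ^ 8 + X ^ 7 + (2) * X ^ 6 + (4) * X ^ 5 + (4) * X ^ 4 + (9) * X ^ 3 + (11) * X ^ 2 + (4) * X + (2)) ^ 2 : ℤ[X]) by
        rw [show (AdjoinRoot.root q13) ^ (208:ℕ) = ((AdjoinRoot.root q13) ^ (104:ℕ)) ^ 2 from pow_mul (AdjoinRoot.root q13) 104 2, h0, ← map_pow]).trans
      (red _ _ ((144) * X ^ 9 + (-480) * X ^ 8 + (1972) * X ^ 7 + (-7564) * X ^ 6 + (29052) * X ^ 5 + (-111952) * X ^ 4 + (431373) * X ^ 3 + (-1662977) * X ^ 2 + (6411264) * X + (-24716421)) ((7329546) * X ^ 10 + (8391874) * X ^ 9 + (4296414) * X ^ 8 + (-1903964) * X ^ 7 + (7340214) * X ^ 6 + (8350600) * X ^ 5 + (11785269) * X ^ 4 + (13203281) * X ^ 3 + (406799) * X ^ 2 + (20420721) * X + (1901263)) (by ring))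
  have h2 : (AdjoinRoot.root q13) ^ (416:ℕ) = (aeval (AdjoinRoot.root q13)) ((9) * X ^ 10 + (11) * X ^ 9 + (6) * X ^ 8 + (7) * X ^ 7 + (5) * X ^ 6 + (10) * X ^ 5 + (11) * X ^ 3 + X ^ 2 + (2) * X + (3) : ℤ[X]) :=
    (show (AdjoinRoot.root q13) ^ (416:ℕ) = (aeval (AdjoinRoot.root q13)) (((7) * X ^ 10 + (8) * X ^ 9 + (11) * X ^ 8 + (10) * X ^ 7 + X ^ 6 + (12) * X ^ 4 + (9) * X ^ 2 + (10) * X + (6)) ^ 2 : ℤ[X]) by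
        rw [show (AdjoinRoot.root q13) ^ (416:ℕ) = ((AdjoinRoot.root q13) ^ (208:ℕ)) ^ 2 from pow_mul (AdjoinRoot.root q13) 208 2, h1, ← map_pow]).trans
      (red _ _ ((49) * X ^ 9 + (-133) * X ^ 8 + (638) * X ^ 7 + (-2307) * X ^ 6 + (8906) * X ^ 5 + (-34280) * X ^ 4 + (132145) * X ^ 3 + (-509709) * X ^ 2 + (1965199) * X + (-7576224)) ((2246678) * X ^ 10 + (2572351) * X ^ 9 + (1316965) * X ^ 8 + (-583599) * X ^ 7 + (2249999) * X ^ 6 + (2559668) * X ^ 5 + (3612572) * X ^ 4 + (4047138) * X ^ 3 + (124723) * X ^ 2 + (6259491) * X + (582789)) (by ring))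
  have h3 : (AdjoinRoot.root q13) ^ (417:ℕ) = (aeval (AdjoinRoot.root q13)) ((5) * X ^ 10 + (2) * X ^ 8 + (5) * X ^ 7 + (4) * X ^ 6 + (11) * X ^ 5 + (4) * X ^ 4 + (3) * X ^ 3 + X ^ 2 + (8) * X + (4) : ℤ[X]) :=
    (show (AdjoinRoot.root q13) ^ (417:ℕ) = (aeval (AdjoinRoot.root q13)) (((9) * X ^ 10 + (11) * X ^ 9 + (6) * X ^ 8 + (7) * X ^ 7 + (5) * X ^ 6 + (10) * X ^ 5 + (11) * X ^ 3 + X ^ 2 + (2) * X + (3)) * X : ℤ[X]) by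
        rw [show (AdjoinRoot.root q13) ^ (417:ℕ) = (AdjoinRoot.root q13) ^ (416:ℕ) * (AdjoinRoot.root q13) from pow_succ (AdjoinRoot.root q13) 416, h2, map_mul, aeval_X]).trans
      (red _ _ ((9)) ((-3) * X ^ 10 + (-3) * X ^ 9 + (-1) * X ^ 8 + (-3) * X ^ 6 + (-5) * X ^ 5 + (-5) * X ^ 4 + (-5) * X ^ 3 + (-2) * X ^ 2 + (-8) * X + (-1)) (by ring))
  have h4 : (AdjoinRoot.root q13) ^ (834:ℕ) = (aeval (AdjoinRoot.root q13)) ((9) * X ^ 10 + (8) * X ^ 9 + (2) * X ^ 6 + (11) * X ^ 5 + (9) * X ^ 4 + (4) * X ^ 3 + (9) * X ^ 2 + (12) * X + (11) : ℤ[X]) :=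
    (show (AdjoinRoot.root q13) ^ (834:ℕ) = (aeval (AdjoinRoot.root q13)) (((5) * X ^ 10 + (2) * X ^ 8 + (5) * X ^ 7 + (4) * X ^ 6 + (11) * X ^ 5 + (4) * X ^ 4 + (3) * X ^ 3 + X ^ 2 + (8) * X + (4)) ^ 2 : ℤ[X]) by
        rw [show (AdjoinRoot.root q13) ^ (834:ℕ) = ((AdjoinRoot.root q13) ^ (417:ℕ)) ^ 2 from pow_mul (AdjoinRoot.root q13) 417 2, h3, ← map_pow]).trans
      (red _ _ ((25) * X ^ 9 + (-125) * X ^ 8 + (520) * X ^ 7 + (-1975) * X ^ 6 + (7569) * X ^ 5 + (-29005) * X ^ 4 + (111686) * X ^ 3 + (-430479) * X ^ 2 + (1659707) * X + (-6398647)) ((1897519) * X ^ 10 + (2172510) * X ^ 9 + (1112242) * X ^ 8 + (-492882) * X ^ 7 + (1900229) * X ^ 6 + (2161858) * X ^ 5 + (3051015) * X ^ 4 + (3418079) * X ^ 3 + (105362) * X ^ 2 + (5286574) * X + (492204)) (by ring))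
  have h5 : (AdjoinRoot.root q13) ^ (1668:ℕ) = (aeval (AdjoinRoot.root q13)) ((5) * X ^ 10 + (12) * X ^ 9 + (7) * X ^ 8 + X ^ 7 + (8) * X ^ 6 + (5) * X ^ 5 + (12) * X ^ 4 + (9) * X ^ 2 + (6) * X : ℤ[X]) :=
    (show (AdjoinRoot.root q13) ^ (1668:ℕ) = (aeval (AdjoinRoot.root q13)) (((9) * X ^ 10 + (8) * X ^ 9 + (2) * X ^ 6 + (11) * X ^ 5 + (9) * X ^ 4 + (4) * X ^ 3 + (9) * X ^ 2 + (12) * X + (11)) ^ 2 : ℤ[X]) by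
        rw [show (AdjoinRoot.root q13) ^ (1668:ℕ) = ((AdjoinRoot.root q13) ^ (834:ℕ)) ^ 2 from pow_mul (AdjoinRoot.root q13) 834 2, h4, ← map_pow]).trans
      (red _ _ ((81) * X ^ 9 + (-261) * X ^ 8 + (964) * X ^ 7 + (-3677) * X ^ 6 + (14123) * X ^ 5 + (-54333) * X ^ 4 + (209561) * X ^ 3 + (-808072) * X ^ 2 + (3115573) * X + (-12010904)) ((3561756) * X ^ 10 + (4078046) * X ^ 9 + (2087807) * X ^ 8 + (-925243) * X ^ 7 + (3566964) * X ^ 6 + (4057902) * X ^ 5 + (5727074) * X ^ 4 + (6416088) * X ^ 3 + (197678) * X ^ 2 + (9923433) * X + (923925)) (by ring))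
  have h6 : (AdjoinRoot.root q13) ^ (1669:ℕ) = (aeval (AdjoinRoot.root q13)) ((8) * X ^ 9 + (4) * X ^ 8 + (8) * X ^ 7 + (6) * X ^ 6 + (8) * X ^ 5 + (12) * X ^ 4 + (4) * X ^ 2 + (10) * X + (8) : ℤ[X]) :=
    (show (AdjoinRoot.root q13) ^ (1669:ℕ) = (aeval (AdjoinRoot.root q13)) (((5) * X ^ 10 + (12) * X ^ 9 + (7) * X ^ 8 + X ^ 7 + (8) * X ^ 6 + (5) * X ^ 5 + (12) * X ^ 4 + (9) * X ^ 2 + (6) * X) * X : ℤ[X]) by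
        rw [show (AdjoinRoot.root q13) ^ (1669:ℕ) = (AdjoinRoot.root q13) ^ (1668:ℕ) * (AdjoinRoot.root q13) from pow_succ (AdjoinRoot.root q13) 1668, h5, map_mul, aeval_X]).trans
      (red _ _ ((5)) ((-1) * X ^ 10 + (-2) * X ^ 9 + (-1) * X ^ 8 + (-2) * X ^ 6 + (-2) * X ^ 5 + (-4) * X ^ 4 + (-2) * X ^ 3 + (-1) * X ^ 2 + (-5) * X + (-1)) (by ring))
  have h7 : (AdjoinRoot.root q13) ^ (3338:ℕ) = (aeval (AdjoinRoot.root q13)) (X ^ 10 + (12) * X ^ 9 + (12) * X ^ 8 + (9) * X ^ 7 + (9) * X ^ 6 + (12) * X ^ 5 + (6) * X ^ 4 + (12) * X ^ 3 + (10) * X ^ 2 + (5) * X : ℤ[X]) :=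
    (show (AdjoinRoot.root q13) ^ (3338:ℕ) = (aeval (AdjoinRoot.root q13)) (((8) * X ^ 9 + (4) * X ^ 8 + (8) * X ^ 7 + (6) * X ^ 6 + (8) * X ^ 5 + (12) * X ^ 4 + (4) * X ^ 2 + (10) * X + (8)) ^ 2 : ℤ[X]) by
        rw [show (AdjoinRoot.root q13) ^ (3338:ℕ) = ((AdjoinRoot.root q13) ^ (1669:ℕ)) ^ 2 from pow_mul (AdjoinRoot.root q13) 1669 2, h6, ← map_pow]).trans
      (red _ _ ((64) * X ^ 7 + (-256) * X ^ 6 + (1104) * X ^ 5 + (-4208) * X ^ 4 + (16272) * X ^ 3 + (-62496) * X ^ 2 + (240692) * X + (-927668)) ((275099) * X ^ 10 + (314928) * X ^ 9 + (161276) * X ^ 8 + (-71497) * X ^ 7 + (275487) * X ^ 6 + (313436) * X ^ 5 + (442262) * X ^ 4 + (495604) * X ^ 3 + (15234) * X ^ 2 + (766447) * X + (71364)) (by ring))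
  have h8 : (AdjoinRoot.root q13) ^ (6676:ℕ) = (aeval (AdjoinRoot.root q13)) (X ^ 10 + (2) * X ^ 9 + (9) * X ^ 8 + (9) * X ^ 7 + (9) * X ^ 6 + (3) * X ^ 5 + (7) * X ^ 4 + (4) * X ^ 3 + (6) * X ^ 2 + X + (2) : ℤ[X]) :=
    (show (AdjoinRoot.root q13) ^ (6676:ℕ) = (aeval (AdjoinRoot.root q13)) ((X ^ 10 + (12) * X ^ 9 + (12) * X ^ 8 + (9) * X ^ 7 + (9) * X ^ 6 + (12) * X ^ 5 + (6) * X ^ 4 + (12) * X ^ 3 + (10) * X ^ 2 + (5) * X) ^ 2 : ℤ[X]) by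
        rw [show (AdjoinRoot.root q13) ^ (6676:ℕ) = ((AdjoinRoot.root q13) ^ (3338:ℕ)) ^ 2 from pow_mul (AdjoinRoot.root q13) 3338 2, h7, ← map_pow]).trans
      (red _ _ (X ^ 9 + (19) * X ^ 8 + (68) * X ^ 7 + (-131) * X ^ 6 + (655) * X ^ 5 + (-2305) * X ^ 4 + (9008) * X ^ 3 + (-34669) * X ^ 2 + (133752) * X + (-515738)) ((152938) * X ^ 10 + (175069) * X ^ 9 + (89603) * X ^ 8 + (-39754) * X ^ 7 + (153130) * X ^ 6 + (174236) * X ^ 5 + (245929) * X ^ 4 + (275489) * X ^ 3 + (8510) * X ^ 2 + (426105) * X + (39672)) (by ring))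
  exact h8

set_option maxHeartbeats 1600000 in
private lemma q13chain_2
    (h0 : (AdjoinRoot.root q13) ^ (6676:ℕ) = (aeval (AdjoinRoot.root q13)) (X ^ 10 + (2) * X ^ 9 + (9) * X ^ 8 + (9) * X ^ 7 + (9) * X ^ 6 + (3) * X ^ 5 + (7) * X ^ 4 + (4) * X ^ 3 + (6) * X ^ 2 + X + (2) : ℤ[X])) :
    (AdjoinRoot.root q13) ^ (427284:ℕ) = (aeval (AdjoinRoot.root q13)) ((3) * X ^ 10 + (8) * X ^ 9 + (7) * X ^ 8 + (2) * X ^ 7 + (2) * X ^ 6 + (3) * X ^ 5 + (5) * X ^ 4 + (4) * X ^ 3 + (5) * X ^ 2 + (3) * X + (1) : ℤ[X]) := by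
  have hq0 : (aeval (AdjoinRoot.root q13)) (X ^ 11 + (5) * X ^ 10 + (5) * X ^ 9 + (2) * X ^ 8 + (5) * X ^ 6 + (6) * X ^ 5 + (8) * X ^ 4 + (7) * X ^ 3 + (3) * X ^ 2 + (11) * X + (1) : ℤ[X]) = 0 := by
    have h1 : (X ^ 11 + (5) * X ^ 10 + (5) * X ^ 9 + (2) * X ^ 8 + (5) * X ^ 6 + (6) * X ^ 5 + (8) * X ^ 4 + (7) * X ^ 3 + (3) * X ^ 2 + (11) * X + (1) : ℤ[X]).map (algebraMap ℤ (ZMod 13)) = q13 := by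
      simp only [q13, Polynomial.map_add, Polynomial.map_mul, Polynomial.map_pow,
        Polynomial.map_ofNat, Polynomial.map_X, Polynomial.map_one]
    rw [← aeval_map_algebraMap (ZMod 13), h1, AdjoinRoot.aeval_eq, AdjoinRoot.mk_self]
  have h13a : (aeval (AdjoinRoot.root q13)) ((13 : ℤ[X])) = 0 := by
    have hz : ((13:ℕ) : AdjoinRoot q13) = 0 := by
      rw [← map_natCast (algebraMap (ZMod 13) (AdjoinRoot q13)) 13,
        show ((13:ℕ) : ZMod 13) = 0 from by decide, map_zero]
    rw [map_ofNat]; exact_mod_cast hz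
  have red : ∀ a b c s : ℤ[X], a = c * (X ^ 11 + (5) * X ^ 10 + (5) * X ^ 9 + (2) * X ^ 8 + (5) * X ^ 6 + (6) * X ^ 5 + (8) * X ^ 4 + (7) * X ^ 3 + (3) * X ^ 2 + (11) * X + (1)) + 13 * s + b → (aeval (AdjoinRoot.root q13)) a = (aeval (AdjoinRoot.root q13)) b := by
    intro a b c s hcert
    rw [hcert, map_add, map_add, map_mul, map_mul, hq0, h13a, mul_zero, zero_mul, add_zero, zero_add]
  have h1 : (AdjoinRoot.root q13) ^ (13352:ℕ) = (aeval (AdjoinRoot.root q13)) ((6) * X ^ 10 + (3) * X ^ 9 + X ^ 8 + (5) * X ^ 7 + (2) * X ^ 6 + (10) * X ^ 5 + X ^ 4 + (2) * X ^ 3 + (6) * X ^ 2 + (10) * X + (4) : ℤ[X]) :=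
    (show (AdjoinRoot.root q13) ^ (13352:ℕ) = (aeval (AdjoinRoot.root q13)) ((X ^ 10 + (2) * X ^ 9 + (9) * X ^ 8 + (9) * X ^ 7 + (9) * X ^ 6 + (3) * X ^ 5 + (7) * X ^ 4 + (4) * X ^ 3 + (6) * X ^ 2 + X + (2)) ^ 2 : ℤ[X]) by
        rw [show (AdjoinRoot.root q13) ^ (13352:ℕ) = ((AdjoinRoot.root q13) ^ (6676:ℕ)) ^ 2 from pow_mul (AdjoinRoot.root q13) 6676 2, h0, ← map_pow]).trans
      (red _ _ (X ^ 9 + (-1) * X ^ 8 + (22) * X ^ 7 + (-53) * X ^ 6 + (292) * X ^ 5 + (-1040) * X ^ 4 + (4114) * X ^ 3 + (-15814) * X ^ 2 + (61003) * X + (-235209)) ((69745) * X ^ 10 + (79841) * X ^ 9 + (40864) * X ^ 8 + (-18149) * X ^ 7 + (69834) * X ^ 6 + (79446) * X ^ 5 + (112150) * X ^ 4 + (125640) * X ^ 3 + (3879) * X ^ 2 + (194330) * X + (18093)) (by ring))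
  have h2 : (AdjoinRoot.root q13) ^ (26704:ℕ) = (aeval (AdjoinRoot.root q13)) ((5) * X ^ 10 + (2) * X ^ 9 + (8) * X ^ 8 + (2) * X ^ 7 + (8) * X ^ 6 + (9) * X ^ 5 + (8) * X ^ 4 + (11) * X ^ 3 + (12) * X + (6) : ℤ[X]) :=
    (show (AdjoinRoot.root q13) ^ (26704:ℕ) = (aeval (AdjoinRoot.root q13)) (((6) * X ^ 10 + (3) * X ^ 9 + X ^ 8 + (5) * X ^ 7 + (2) * X ^ 6 + (10) * X ^ 5 + X ^ 4 + (2) * X ^ 3 + (6) * X ^ 2 + (10) * X + (4)) ^ 2 : ℤ[X]) by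
        rw [show (AdjoinRoot.root q13) ^ (26704:ℕ) = ((AdjoinRoot.root q13) ^ (13352:ℕ)) ^ 2 from pow_mul (AdjoinRoot.root q13) 13352 2, h1, ← map_pow]).trans
      (red _ _ ((36) * X ^ 9 + (-144) * X ^ 8 + (561) * X ^ 7 + (-2091) * X ^ 6 + (7993) * X ^ 5 + (-30670) * X ^ 4 + (118172) * X ^ 3 + (-455655) * X ^ 2 + (1756934) * X + (-6773536)) ((2008676) * X ^ 10 + (2299820) * X ^ 9 + (1177395) * X ^ 8 + (-521751) * X ^ 7 + (2011578) * X ^ 6 + (2288485) * X ^ 5 + (3229813) * X ^ 4 + (3618316) * X ^ 3 + (111549) * X ^ 2 + (5596310) * X + (521042)) (by ring))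
  have h3 : (AdjoinRoot.root q13) ^ (26705:ℕ) = (aeval (AdjoinRoot.root q13)) ((3) * X ^ 10 + (9) * X ^ 9 + (5) * X ^ 8 + (8) * X ^ 7 + (10) * X ^ 6 + (4) * X ^ 5 + (10) * X ^ 4 + (4) * X ^ 3 + (10) * X ^ 2 + (3) * X + (8) : ℤ[X]) :=
    (show (AdjoinRoot.root q13) ^ (26705:ℕ) = (aeval (AdjoinRoot.root q13)) (((5) * X ^ 10 + (2) * X ^ 9 + (8) * X ^ 8 + (2) * X ^ 7 + (8) * X ^ 6 + (9) * X ^ 5 + (8) * X ^ 4 + (11) * X ^ 3 + (12) * X + (6)) * X : ℤ[X]) by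
        rw [show (AdjoinRoot.root q13) ^ (26705:ℕ) = (AdjoinRoot.root q13) ^ (26704:ℕ) * (AdjoinRoot.root q13) from pow_succ (AdjoinRoot.root q13) 26704, h2, map_mul, aeval_X]).trans
      (red _ _ ((5)) ((-2) * X ^ 10 + (-2) * X ^ 9 + (-1) * X ^ 8 + (-2) * X ^ 6 + (-2) * X ^ 5 + (-3) * X ^ 4 + (-3) * X ^ 3 + (-1) * X ^ 2 + (-4) * X + (-1)) (by ring))
  have h4 : (AdjoinRoot.root q13) ^ (53410:ℕ) = (aeval (AdjoinRoot.root q13)) (X ^ 10 + (3) * X ^ 9 + (2) * X ^ 8 + (2) * X ^ 7 + (11) * X ^ 6 + (3) * X ^ 5 + (10) * X ^ 4 + (7) * X ^ 3 + (10) * X ^ 2 + X + (5) : ℤ[X]) :=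
    (show (AdjoinRoot.root q13) ^ (53410:ℕ) = (aeval (AdjoinRoot.root q13)) (((3) * X ^ 10 + (9) * X ^ 9 + (5) * X ^ 8 + (8) * X ^ 7 + (10) * X ^ 6 + (4) * X ^ 5 + (10) * X ^ 4 + (4) * X ^ 3 + (10) * X ^ 2 + (3) * X + (8)) ^ 2 : ℤ[X]) by
        rw [show (AdjoinRoot.root q13) ^ (53410:ℕ) = ((AdjoinRoot.root q13) ^ (26705:ℕ)) ^ 2 from pow_mul (AdjoinRoot.root q13) 26705 2, h3, ← map_pow]).trans
      (red _ _ ((9) * X ^ 9 + (9) * X ^ 8 + (21) * X ^ 7 + (-30) * X ^ 6 + (256) * X ^ 5 + (-933) * X ^ 4 + (3642) * X ^ 3 + (-13884) * X ^ 2 + (53361) * X + (-205549)) ((60945) * X ^ 10 + (69761) * X ^ 9 + (35742) * X ^ 8 + (-15863) * X ^ 7 + (61043) * X ^ 6 + (69452) * X ^ 5 + (97974) * X ^ 4 + (109843) * X ^ 3 + (3363) * X ^ 2 + (169825) * X + (15816)) (by ring))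
  have h5 : (AdjoinRoot.root q13) ^ (106820:ℕ) = (aeval (AdjoinRoot.root q13)) ((11) * X ^ 9 + (4) * X ^ 6 + (3) * X ^ 4 + (2) * X ^ 3 + (11) * X : ℤ[X]) :=
    (show (AdjoinRoot.root q13) ^ (106820:ℕ) = (aeval (AdjoinRoot.root q13)) ((X ^ 10 + (3) * X ^ 9 + (2) * X ^ 8 + (2) * X ^ 7 + (11) * X ^ 6 + (3) * X ^ 5 + (10) * X ^ 4 + (7) * X ^ 3 + (10) * X ^ 2 + X + (5)) ^ 2 : ℤ[X]) by
        rw [show (AdjoinRoot.root q13) ^ (106820:ℕ) = ((AdjoinRoot.root q13) ^ (53410:ℕ)) ^ 2 from pow_mul (AdjoinRoot.root q13) 53410 2, h4, ← map_pow]).trans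
      (red _ _ (X ^ 9 + X ^ 8 + (3) * X ^ 7 + (-6) * X ^ 6 + (51) * X ^ 5 + (-156) * X ^ 4 + (612) * X ^ 3 + (-2281) * X ^ 2 + (8889) * X + (-34321)) ((10194) * X ^ 10 + (11661) * X ^ 9 + (5972) * X ^ 8 + (-2647) * X ^ 7 + (10193) * X ^ 6 + (11600) * X ^ 5 + (16371) * X ^ 4 + (18319) * X ^ 3 + (582) * X ^ 2 + (28357) * X + (2642)) (by ring))
  have h6 : (AdjoinRoot.root q13) ^ (106821:ℕ) = (aeval (AdjoinRoot.root q13)) ((11) * X ^ 10 + (4) * X ^ 7 + (3) * X ^ 5 + (2) * X ^ 4 + (11) * X ^ 2 : ℤ[X]) :=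
    (show (AdjoinRoot.root q13) ^ (106821:ℕ) = (aeval (AdjoinRoot.root q13)) (((11) * X ^ 9 + (4) * X ^ 6 + (3) * X ^ 4 + (2) * X ^ 3 + (11) * X) * X : ℤ[X]) by
        rw [show (AdjoinRoot.root q13) ^ (106821:ℕ) = (AdjoinRoot.root q13) ^ (106820:ℕ) * (AdjoinRoot.root q13) from pow_succ (AdjoinRoot.root q13) 106820, h5, map_mul, aeval_X]).trans
      (red _ _ ((0)) ((0)) (by ring))
  have h7 : (AdjoinRoot.root q13) ^ (213642:ℕ) = (aeval (AdjoinRoot.root q13)) ((6) * X ^ 10 + (3) * X ^ 9 + (9) * X ^ 8 + (6) * X ^ 7 + (2) * X ^ 6 + (5) * X ^ 5 + (4) * X ^ 4 + (9) * X ^ 3 + (9) * X ^ 2 + (7) * X + (12) : ℤ[X]) :=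
    (show (AdjoinRoot.root q13) ^ (213642:ℕ) = (aeval (AdjoinRoot.root q13)) (((11) * X ^ 10 + (4) * X ^ 7 + (3) * X ^ 5 + (2) * X ^ 4 + (11) * X ^ 2) ^ 2 : ℤ[X]) by
        rw [show (AdjoinRoot.root q13) ^ (213642:ℕ) = ((AdjoinRoot.root q13) ^ (106821:ℕ)) ^ 2 from pow_mul (AdjoinRoot.root q13) 106821 2, h6, ← map_pow]).trans
      (red _ _ ((121) * X ^ 9 + (-605) * X ^ 8 + (2420) * X ^ 7 + (-9229) * X ^ 6 + (35255) * X ^ 5 + (-135509) * X ^ 4 + (522087) * X ^ 3 + (-2012838) * X ^ 2 + (7760657) * X + (-29919642)) ((8872615) * X ^ 10 + (10158573) * X ^ 9 + (5200762) * X ^ 8 + (-2304692) * X ^ 7 + (8885412) * X ^ 6 + (10108580) * X ^ 5 + (14266440) * X ^ 4 + (15982665) * X ^ 3 + (492656) * X ^ 2 + (24719646) * X + (2301510)) (by ring))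
  have h8 : (AdjoinRoot.root q13) ^ (427284:ℕ) = (aeval (AdjoinRoot.root q13)) ((3) * X ^ 10 + (8) * X ^ 9 + (7) * X ^ 8 + (2) * X ^ 7 + (2) * X ^ 6 + (3) * X ^ 5 + (5) * X ^ 4 + (4) * X ^ 3 + (5) * X ^ 2 + (3) * X + (1) : ℤ[X]) :=
    (show (AdjoinRoot.root q13) ^ (427284:ℕ) = (aeval (AdjoinRoot.root q13)) (((6) * X ^ 10 + (3) * X ^ 9 + (9) * X ^ 8 + (6) * X ^ 7 + (2) * X ^ 6 + (5) * X ^ 5 + (4) * X ^ 4 + (9) * X ^ 3 + (9) * X ^ 2 + (7) * X + (12)) ^ 2 : ℤ[X]) by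
        rw [show (AdjoinRoot.root q13) ^ (427284:ℕ) = ((AdjoinRoot.root q13) ^ (213642:ℕ)) ^ 2 from pow_mul (AdjoinRoot.root q13) 213642 2, h7, ← map_pow]).trans
      (red _ _ ((36) * X ^ 9 + (-144) * X ^ 8 + (657) * X ^ 7 + (-2511) * X ^ 6 + (9699) * X ^ 5 + (-37254) * X ^ 4 + (143451) * X ^ 3 + (-552846) * X ^ 2 + (2131294) * X + (-8216559)) ((2436624) * X ^ 10 + (2789724) * X ^ 9 + (1428282) * X ^ 8 + (-632925) * X ^ 7 + (2440115) * X ^ 6 + (2776077) * X ^ 5 + (3917811) * X ^ 4 + (4389248) * X ^ 3 + (135273) * X ^ 2 + (6788540) * X + (632054)) (by ring))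
  exact h8

set_option maxHeartbeats 1600000 in
private lemma q13chain_3
    (h0 : (AdjoinRoot.root q13) ^ (427284:ℕ) = (aeval (AdjoinRoot.root q13)) ((3) * X ^ 10 + (8) * X ^ 9 + (7) * X ^ 8 + (2) * X ^ 7 + (2) * X ^ 6 + (3) * X ^ 5 + (5) * X ^ 4 + (4) * X ^ 3 + (5) * X ^ 2 + (3) * X + (1) : ℤ[X])) :
    (AdjoinRoot.root q13) ^ (27346196:ℕ) = (aeval (AdjoinRoot.root q13)) ((5) * X ^ 10 + (6) * X ^ 9 + (5) * X ^ 8 + (5) * X ^ 7 + (2) * X ^ 6 + (4) * X ^ 5 + (8) * X ^ 4 + (5) * X ^ 3 + (12) * X ^ 2 + (11) * X + (6) : ℤ[X]) := by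
  have hq0 : (aeval (AdjoinRoot.root q13)) (X ^ 11 + (5) * X ^ 10 + (5) * X ^ 9 + (2) * X ^ 8 + (5) * X ^ 6 + (6) * X ^ 5 + (8) * X ^ 4 + (7) * X ^ 3 + (3) * X ^ 2 + (11) * X + (1) : ℤ[X]) = 0 := by
    have h1 : (X ^ 11 + (5) * X ^ 10 + (5) * X ^ 9 + (2) * X ^ 8 + (5) * X ^ 6 + (6) * X ^ 5 + (8) * X ^ 4 + (7) * X ^ 3 + (3) * X ^ 2 + (11) * X + (1) : ℤ[X]).map (algebraMap ℤ (ZMod 13)) = q13 := by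
      simp only [q13, Polynomial.map_add, Polynomial.map_mul, Polynomial.map_pow,
        Polynomial.map_ofNat, Polynomial.map_X, Polynomial.map_one]
    rw [← aeval_map_algebraMap (ZMod 13), h1, AdjoinRoot.aeval_eq, AdjoinRoot.mk_self]
  have h13a : (aeval (AdjoinRoot.root q13)) ((13 : ℤ[X])) = 0 := by
    have hz : ((13:ℕ) : AdjoinRoot q13) = 0 := by
      rw [← map_natCast (algebraMap (ZMod 13) (AdjoinRoot q13)) 13,
        show ((13:ℕ) : ZMod 13) = 0 from by decide, map_zero]
    rw [map_ofNat]; exact_mod_cast hz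
  have red : ∀ a b c s : ℤ[X], a = c * (X ^ 11 + (5) * X ^ 10 + (5) * X ^ 9 + (2) * X ^ 8 + (5) * X ^ 6 + (6) * X ^ 5 + (8) * X ^ 4 + (7) * X ^ 3 + (3) * X ^ 2 + (11) * X + (1)) + 13 * s + b → (aeval (AdjoinRoot.root q13)) a = (aeval (AdjoinRoot.root q13)) b := by
    intro a b c s hcert
    rw [hcert, map_add, map_add, map_mul, map_mul, hq0, h13a, mul_zero, zero_mul, add_zero, zero_add]
  have h1 : (AdjoinRoot.root q13) ^ (854568:ℕ) = (aeval (AdjoinRoot.root q13)) ((7) * X ^ 10 + (6) * X ^ 9 + (7) * X ^ 8 + (8) * X ^ 7 + (7) * X ^ 6 + (5) * X ^ 5 + X ^ 4 + (5) * X ^ 3 + (9) * X ^ 2 + (9) * X + (12) : ℤ[X]) :=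
    (show (AdjoinRoot.root q13) ^ (854568:ℕ) = (aeval (AdjoinRoot.root q13)) (((3) * X ^ 10 + (8) * X ^ 9 + (7) * X ^ 8 + (2) * X ^ 7 + (2) * X ^ 6 + (3) * X ^ 5 + (5) * X ^ 4 + (4) * X ^ 3 + (5) * X ^ 2 + (3) * X + (1)) ^ 2 : ℤ[X]) by
        rw [show (AdjoinRoot.root q13) ^ (854568:ℕ) = ((AdjoinRoot.root q13) ^ (427284:ℕ)) ^ 2 from pow_mul (AdjoinRoot.root q13) 427284 2, h0, ← map_pow]).trans
      (red _ _ ((9) * X ^ 9 + (3) * X ^ 8 + (46) * X ^ 7 + (-139) * X ^ 6 + (552) * X ^ 5 + (-2124) * X ^ 4 + (8179) * X ^ 3 + (-31545) * X ^ 2 + (121590) * X + (-468739)) ((138999) * X ^ 10 + (159143) * X ^ 9 + (81481) * X ^ 8 + (-36103) * X ^ 7 + (139214) * X ^ 6 + (158375) * X ^ 5 + (223510) * X ^ 4 + (250404) * X ^ 3 + (7714) * X ^ 2 + (387272) * X + (36056)) (by ring))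
  have h2 : (AdjoinRoot.root q13) ^ (1709136:ℕ) = (aeval (AdjoinRoot.root q13)) ((11) * X ^ 9 + (6) * X ^ 8 + (6) * X ^ 7 + (9) * X ^ 6 + (8) * X ^ 5 + (4) * X ^ 4 + (4) * X ^ 3 + (2) * X ^ 2 + (4) * X + (11) : ℤ[X]) :=
    (show (AdjoinRoot.root q13) ^ (1709136:ℕ) = (aeval (AdjoinRoot.root q13)) (((7) * X ^ 10 + (6) * X ^ 9 + (7) * X ^ 8 + (8) * X ^ 7 + (7) * X ^ 6 + (5) * X ^ 5 + X ^ 4 + (5) * X ^ 3 + (9) * X ^ 2 + (9) * X + (12)) ^ 2 : ℤ[X]) by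
        rw [show (AdjoinRoot.root q13) ^ (1709136:ℕ) = ((AdjoinRoot.root q13) ^ (854568:ℕ)) ^ 2 from pow_mul (AdjoinRoot.root q13) 854568 2, h1, ← map_pow]).trans
      (red _ _ ((49) * X ^ 9 + (-161) * X ^ 8 + (694) * X ^ 7 + (-2567) * X ^ 6 + (9930) * X ^ 5 + (-38182) * X ^ 4 + (147141) * X ^ 3 + (-567287) * X ^ 2 + (2187039) * X + (-8431472)) ((2500324) * X ^ 10 + (2862717) * X ^ 9 + (1465630) * X ^ 8 + (-649474) * X ^ 7 + (2503970) * X ^ 6 + (2848646) * X ^ 5 + (4020322) * X ^ 4 + (4504037) * X ^ 3 + (138813) * X ^ 2 + (6966105) * X + (648585)) (by ring))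
  have h3 : (AdjoinRoot.root q13) ^ (1709137:ℕ) = (aeval (AdjoinRoot.root q13)) ((11) * X ^ 10 + (6) * X ^ 9 + (6) * X ^ 8 + (9) * X ^ 7 + (8) * X ^ 6 + (4) * X ^ 5 + (4) * X ^ 4 + (2) * X ^ 3 + (4) * X ^ 2 + (11) * X : ℤ[X]) :=
    (show (AdjoinRoot.root q13) ^ (1709137:ℕ) = (aeval (AdjoinRoot.root q13)) (((11) * X ^ 9 + (6) * X ^ 8 + (6) * X ^ 7 + (9) * X ^ 6 + (8) * X ^ 5 + (4) * X ^ 4 + (4) * X ^ 3 + (2) * X ^ 2 + (4) * X + (11)) * X : ℤ[X]) by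
        rw [show (AdjoinRoot.root q13) ^ (1709137:ℕ) = (AdjoinRoot.root q13) ^ (1709136:ℕ) * (AdjoinRoot.root q13) from pow_succ (AdjoinRoot.root q13) 1709136, h2, map_mul, aeval_X]).trans
      (red _ _ ((0)) ((0)) (by ring))
  have h4 : (AdjoinRoot.root q13) ^ (3418274:ℕ) = (aeval (AdjoinRoot.root q13)) ((11) * X ^ 10 + (4) * X ^ 9 + (7) * X ^ 8 + (11) * X ^ 6 + (4) * X ^ 5 + (10) * X ^ 4 + (5) * X ^ 3 + (12) * X ^ 2 + X : ℤ[X]) :=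
    (show (AdjoinRoot.root q13) ^ (3418274:ℕ) = (aeval (AdjoinRoot.root q13)) (((11) * X ^ 10 + (6) * X ^ 9 + (6) * X ^ 8 + (9) * X ^ 7 + (8) * X ^ 6 + (4) * X ^ 5 + (4) * X ^ 4 + (2) * X ^ 3 + (4) * X ^ 2 + (11) * X) ^ 2 : ℤ[X]) by
        rw [show (AdjoinRoot.root q13) ^ (3418274:ℕ) = ((AdjoinRoot.root q13) ^ (1709137:ℕ)) ^ 2 from pow_mul (AdjoinRoot.root q13) 1709137 2, h3, ← map_pow]).trans
      (red _ _ ((121) * X ^ 9 + (-473) * X ^ 8 + (1928) * X ^ 7 + (-7247) * X ^ 6 + (27861) * X ^ 5 + (-107239) * X ^ 4 + (413336) * X ^ 3 + (-1593693) * X ^ 2 + (6144163) * X + (-23686871)) ((7024216) * X ^ 10 + (8042322) * X ^ 9 + (4117413) * X ^ 8 + (-1824634) * X ^ 7 + (7034475) * X ^ 6 + (8002741) * X ^ 5 + (11294423) * X ^ 4 + (12653306) * X ^ 3 + (389894) * X ^ 2 + (19570109) * X + (1822067)) (by ring))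
  have h5 : (AdjoinRoot.root q13) ^ (6836548:ℕ) = (aeval (AdjoinRoot.root q13)) (X ^ 10 + (3) * X ^ 9 + (6) * X ^ 8 + (10) * X ^ 7 + (5) * X ^ 6 + (10) * X ^ 5 + (5) * X ^ 4 + (7) * X ^ 2 + (11) * X + (9) : ℤ[X]) :=
    (show (AdjoinRoot.root q13) ^ (6836548:ℕ) = (aeval (AdjoinRoot.root q13)) (((11) * X ^ 10 + (4) * X ^ 9 + (7) * X ^ 8 + (11) * X ^ 6 + (4) * X ^ 5 + (10) * X ^ 4 + (5) * X ^ 3 + (12) * X ^ 2 + X) ^ 2 : ℤ[X]) by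
        rw [show (AdjoinRoot.root q13) ^ (6836548:ℕ) = ((AdjoinRoot.root q13) ^ (3418274:ℕ)) ^ 2 from pow_mul (AdjoinRoot.root q13) 3418274 2, h4, ← map_pow]).trans
      (red _ _ ((121) * X ^ 9 + (-517) * X ^ 8 + (2150) * X ^ 7 + (-8351) * X ^ 6 + (32330) * X ^ 5 + (-124624) * X ^ 4 + (480437) * X ^ 3 + (-1852095) * X ^ 2 + (7140247) * X + (-27526846)) ((8162978) * X ^ 10 + (9346033) * X ^ 9 + (4784965) * X ^ 8 + (-2120528) * X ^ 7 + (8174870) * X ^ 6 + (9300086) * X ^ 5 + (13125330) * X ^ 4 + (14704601) * X ^ 3 + (453070) * X ^ 2 + (22742696) * X + (2117449)) (by ring))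
  have h6 : (AdjoinRoot.root q13) ^ (6836549:ℕ) = (aeval (AdjoinRoot.root q13)) ((11) * X ^ 10 + X ^ 9 + (8) * X ^ 8 + (5) * X ^ 7 + (5) * X ^ 6 + (12) * X ^ 5 + (5) * X ^ 4 + (8) * X ^ 2 + (11) * X + (12) : ℤ[X]) :=
    (show (AdjoinRoot.root q13) ^ (6836549:ℕ) = (aeval (AdjoinRoot.root q13)) ((X ^ 10 + (3) * X ^ 9 + (6) * X ^ 8 + (10) * X ^ 7 + (5) * X ^ 6 + (10) * X ^ 5 + (5) * X ^ 4 + (7) * X ^ 2 + (11) * X + (9)) * X : ℤ[X]) by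
        rw [show (AdjoinRoot.root q13) ^ (6836549:ℕ) = (AdjoinRoot.root q13) ^ (6836548:ℕ) * (AdjoinRoot.root q13) from pow_succ (AdjoinRoot.root q13) 6836548, h5, map_mul, aeval_X]).trans
      (red _ _ ((1)) ((-1) * X ^ 10 + (-1) * X ^ 5 + (-1) * X ^ 4 + (-1) * X + (-1)) (by ring))
  have h7 : (AdjoinRoot.root q13) ^ (13673098:ℕ) = (aeval (AdjoinRoot.root q13)) ((9) * X ^ 10 + (4) * X ^ 9 + (9) * X ^ 8 + (10) * X ^ 7 + (8) * X ^ 6 + (7) * X ^ 5 + (12) * X ^ 4 + (10) * X ^ 3 + (7) * X ^ 2 + (3) * X + (5) : ℤ[X]) :=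
    (show (AdjoinRoot.root q13) ^ (13673098:ℕ) = (aeval (AdjoinRoot.root q13)) (((11) * X ^ 10 + X ^ 9 + (8) * X ^ 8 + (5) * X ^ 7 + (5) * X ^ 6 + (12) * X ^ 5 + (5) * X ^ 4 + (8) * X ^ 2 + (11) * X + (12)) ^ 2 : ℤ[X]) by
        rw [show (AdjoinRoot.root q13) ^ (13673098:ℕ) = ((AdjoinRoot.root q13) ^ (6836549:ℕ)) ^ 2 from pow_mul (AdjoinRoot.root q13) 6836549 2, h6, ← map_pow]).trans
      (red _ _ ((121) * X ^ 9 + (-583) * X ^ 8 + (2487) * X ^ 7 + (-9636) * X ^ 6 + (37095) * X ^ 5 + (-142520) * X ^ 4 + (548825) * X ^ 3 + (-2115368) * X ^ 2 + (8155231) * X + (-31440374)) ((9323629) * X ^ 10 + (10674794) * X ^ 9 + (5465205) * X ^ 8 + (-2421867) * X ^ 7 + (9337020) * X ^ 6 + (10622501) * X ^ 5 + (14991392) * X ^ 4 + (16795178) * X ^ 3 + (517635) * X ^ 2 + (25976088) * X + (2418501)) (by ring))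
  have h8 : (AdjoinRoot.root q13) ^ (27346196:ℕ) = (aeval (AdjoinRoot.root q13)) ((5) * X ^ 10 + (6) * X ^ 9 + (5) * X ^ 8 + (5) * X ^ 7 + (2) * X ^ 6 + (4) * X ^ 5 + (8) * X ^ 4 + (5) * X ^ 3 + (12) * X ^ 2 + (11) * X + (6) : ℤ[X]) :=
    (show (AdjoinRoot.root q13) ^ (27346196:ℕ) = (aeval (AdjoinRoot.root q13)) (((9) * X ^ 10 + (4) * X ^ 9 + (9) * X ^ 8 + (10) * X ^ 7 + (8) * X ^ 6 + (7) * X ^ 5 + (12) * X ^ 4 + (10) * X ^ 3 + (7) * X ^ 2 + (3) * X + (5)) ^ 2 : ℤ[X]) by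
        rw [show (AdjoinRoot.root q13) ^ (27346196:ℕ) = ((AdjoinRoot.root q13) ^ (13673098:ℕ)) ^ 2 from pow_mul (AdjoinRoot.root q13) 13673098 2, h7, ← map_pow]).trans
      (red _ _ ((81) * X ^ 9 + (-333) * X ^ 8 + (1438) * X ^ 7 + (-5435) * X ^ 6 + (20956) * X ^ 5 + (-80516) * X ^ 4 + (310365) * X ^ 3 + (-1196435) * X ^ 2 + (4612652) * X + (-17782759)) ((5273419) * X ^ 10 + (6037691) * X ^ 9 + (3091100) * X ^ 8 + (-1369846) * X ^ 7 + (5281051) * X ^ 6 + (6008022) * X ^ 5 + (8479195) * X ^ 4 + (9499378) * X ^ 3 + (292739) * X ^ 2 + (14692132) * X + (1367906)) (by ring))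
  exact h8

set_option maxHeartbeats 1600000 in
private lemma q13chain_4
    (h0 : (AdjoinRoot.root q13) ^ (27346196:ℕ) = (aeval (AdjoinRoot.root q13)) ((5) * X ^ 10 + (6) * X ^ 9 + (5) * X ^ 8 + (5) * X ^ 7 + (2) * X ^ 6 + (4) * X ^ 5 + (8) * X ^ 4 + (5) * X ^ 3 + (12) * X ^ 2 + (11) * X + (6) : ℤ[X])) :
    (AdjoinRoot.root q13) ^ (875078316:ℕ) = (aeval (AdjoinRoot.root q13)) ((9) * X ^ 10 + (10) * X ^ 9 + (12) * X ^ 8 + (6) * X ^ 5 + (8) * X ^ 4 + X ^ 3 + (6) * X ^ 2 + (8) * X : ℤ[X]) := by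
  have hq0 : (aeval (AdjoinRoot.root q13)) (X ^ 11 + (5) * X ^ 10 + (5) * X ^ 9 + (2) * X ^ 8 + (5) * X ^ 6 + (6) * X ^ 5 + (8) * X ^ 4 + (7) * X ^ 3 + (3) * X ^ 2 + (11) * X + (1) : ℤ[X]) = 0 := by
    have h1 : (X ^ 11 + (5) * X ^ 10 + (5) * X ^ 9 + (2) * X ^ 8 + (5) * X ^ 6 + (6) * X ^ 5 + (8) * X ^ 4 + (7) * X ^ 3 + (3) * X ^ 2 + (11) * X + (1) : ℤ[X]).map (algebraMap ℤ (ZMod 13)) = q13 := by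
      simp only [q13, Polynomial.map_add, Polynomial.map_mul, Polynomial.map_pow,
        Polynomial.map_ofNat, Polynomial.map_X, Polynomial.map_one]
    rw [← aeval_map_algebraMap (ZMod 13), h1, AdjoinRoot.aeval_eq, AdjoinRoot.mk_self]
  have h13a : (aeval (AdjoinRoot.root q13)) ((13 : ℤ[X])) = 0 := by
    have hz : ((13:ℕ) : AdjoinRoot q13) = 0 := by
      rw [← map_natCast (algebraMap (ZMod 13) (AdjoinRoot q13)) 13,
        show ((13:ℕ) : ZMod 13) = 0 from by decide, map_zero]
    rw [map_ofNat]; exact_mod_cast hz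
  have red : ∀ a b c s : ℤ[X], a = c * (X ^ 11 + (5) * X ^ 10 + (5) * X ^ 9 + (2) * X ^ 8 + (5) * X ^ 6 + (6) * X ^ 5 + (8) * X ^ 4 + (7) * X ^ 3 + (3) * X ^ 2 + (11) * X + (1)) + 13 * s + b → (aeval (AdjoinRoot.root q13)) a = (aeval (AdjoinRoot.root q13)) b := by
    intro a b c s hcert
    rw [hcert, map_add, map_add, map_mul, map_mul, hq0, h13a, mul_zero, zero_mul, add_zero, zero_add]
  have h1 : (AdjoinRoot.root q13) ^ (27346197:ℕ) = (aeval (AdjoinRoot.root q13)) ((7) * X ^ 10 + (6) * X ^ 9 + (8) * X ^ 8 + (2) * X ^ 7 + (5) * X ^ 6 + (4) * X ^ 5 + (4) * X ^ 4 + (3) * X ^ 3 + (9) * X ^ 2 + (3) * X + (8) : ℤ[X]) :=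
    (show (AdjoinRoot.root q13) ^ (27346197:ℕ) = (aeval (AdjoinRoot.root q13)) (((5) * X ^ 10 + (6) * X ^ 9 + (5) * X ^ 8 + (5) * X ^ 7 + (2) * X ^ 6 + (4) * X ^ 5 + (8) * X ^ 4 + (5) * X ^ 3 + (12) * X ^ 2 + (11) * X + (6)) * X : ℤ[X]) by
        rw [show (AdjoinRoot.root q13) ^ (27346197:ℕ) = (AdjoinRoot.root q13) ^ (27346196:ℕ) * (AdjoinRoot.root q13) from pow_succ (AdjoinRoot.root q13) 27346196, h0, map_mul, aeval_X]).trans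
      (red _ _ ((5)) ((-2) * X ^ 10 + (-2) * X ^ 9 + (-1) * X ^ 8 + (-2) * X ^ 6 + (-2) * X ^ 5 + (-3) * X ^ 4 + (-2) * X ^ 3 + (-1) * X ^ 2 + (-4) * X + (-1)) (by ring))
  have h2 : (AdjoinRoot.root q13) ^ (54692394:ℕ) = (aeval (AdjoinRoot.root q13)) ((11) * X ^ 10 + (11) * X ^ 9 + (11) * X ^ 8 + (6) * X ^ 7 + (6) * X ^ 6 + (6) * X ^ 5 + (7) * X ^ 3 + (4) * X ^ 2 + (3) * X + (6) : ℤ[X]) :=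
    (show (AdjoinRoot.root q13) ^ (54692394:ℕ) = (aeval (AdjoinRoot.root q13)) (((7) * X ^ 10 + (6) * X ^ 9 + (8) * X ^ 8 + (2) * X ^ 7 + (5) * X ^ 6 + (4) * X ^ 5 + (4) * X ^ 4 + (3) * X ^ 3 + (9) * X ^ 2 + (3) * X + (8)) ^ 2 : ℤ[X]) by
        rw [show (AdjoinRoot.root q13) ^ (54692394:ℕ) = ((AdjoinRoot.root q13) ^ (27346197:ℕ)) ^ 2 from pow_mul (AdjoinRoot.root q13) 27346197 2, h1, ← map_pow]).trans
      (red _ _ ((49) * X ^ 9 + (-161) * X ^ 8 + (708) * X ^ 7 + (-2709) * X ^ 6 + (10485) * X ^ 5 + (-40393) * X ^ 4 + (155657) * X ^ 3 + (-600082) * X ^ 2 + (2313420) * X + (-8918605)) ((2644781) * X ^ 10 + (3028090) * X ^ 9 + (1550322) * X ^ 8 + (-687025) * X ^ 7 + (2648638) * X ^ 6 + (3013219) * X ^ 5 + (4252575) * X ^ 4 + (4764255) * X ^ 3 + (146802) * X ^ 2 + (7368560) * X + (686051)) (by ring))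
  have h3 : (AdjoinRoot.root q13) ^ (109384788:ℕ) = (aeval (AdjoinRoot.root q13)) ((6) * X ^ 9 + (12) * X ^ 8 + (6) * X ^ 7 + (10) * X ^ 6 + (2) * X ^ 5 + (7) * X ^ 4 + (4) * X ^ 3 + (10) * X ^ 2 + (9) * X + (4) : ℤ[X]) :=
    (show (AdjoinRoot.root q13) ^ (109384788:ℕ) = (aeval (AdjoinRoot.root q13)) (((11) * X ^ 10 + (11) * X ^ 9 + (11) * X ^ 8 + (6) * X ^ 7 + (6) * X ^ 6 + (6) * X ^ 5 + (7) * X ^ 3 + (4) * X ^ 2 + (3) * X + (6)) ^ 2 : ℤ[X]) by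
        rw [show (AdjoinRoot.root q13) ^ (109384788:ℕ) = ((AdjoinRoot.root q13) ^ (54692394:ℕ)) ^ 2 from pow_mul (AdjoinRoot.root q13) 54692394 2, h2, ← map_pow]).trans
      (red _ _ ((121) * X ^ 9 + (-363) * X ^ 8 + (1573) * X ^ 7 + (-5918) * X ^ 6 + (22836) * X ^ 5 + (-87945) * X ^ 4 + (338770) * X ^ 3 + (-1306094) * X ^ 2 + (5035069) * X + (-19411113)) ((5756278) * X ^ 10 + (6590574) * X ^ 9 + (3374222) * X ^ 8 + (-1495243) * X ^ 7 + (5764709) * X ^ 6 + (6558243) * X ^ 5 + (9255633) * X ^ 4 + (10369304) * X ^ 3 + (319517) * X ^ 2 + (16037477) * X + (1493165)) (by ring))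
  have h4 : (AdjoinRoot.root q13) ^ (109384789:ℕ) = (aeval (AdjoinRoot.root q13)) ((6) * X ^ 10 + (12) * X ^ 9 + (6) * X ^ 8 + (10) * X ^ 7 + (2) * X ^ 6 + (7) * X ^ 5 + (4) * X ^ 4 + (10) * X ^ 3 + (9) * X ^ 2 + (4) * X : ℤ[X]) :=
    (show (AdjoinRoot.root q13) ^ (109384789:ℕ) = (aeval (AdjoinRoot.root q13)) (((6) * X ^ 9 + (12) * X ^ 8 + (6) * X ^ 7 + (10) * X ^ 6 + (2) * X ^ 5 + (7) * X ^ 4 + (4) * X ^ 3 + (10) * X ^ 2 + (9) * X + (4)) * X : ℤ[X]) by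
        rw [show (AdjoinRoot.root q13) ^ (109384789:ℕ) = (AdjoinRoot.root q13) ^ (109384788:ℕ) * (AdjoinRoot.root q13) from pow_succ (AdjoinRoot.root q13) 109384788, h3, map_mul, aeval_X]).trans
      (red _ _ ((0)) ((0)) (by ring))
  have h5 : (AdjoinRoot.root q13) ^ (218769578:ℕ) = (aeval (AdjoinRoot.root q13)) ((11) * X ^ 8 + X ^ 7 + (8) * X ^ 6 + (6) * X ^ 5 + (6) * X ^ 4 + (2) * X ^ 3 + (2) * X ^ 2 + (2) * X + (8) : ℤ[X]) :=
    (show (AdjoinRoot.root q13) ^ (218769578:ℕ) = (aeval (AdjoinRoot.root q13)) (((6) * X ^ 10 + (12) * X ^ 9 + (6) * X ^ 8 + (10) * X ^ 7 + (2) * X ^ 6 + (7) * X ^ 5 + (4) * X ^ 4 + (10) * X ^ 3 + (9) * X ^ 2 + (4) * X) ^ 2 : ℤ[X]) by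
        rw [show (AdjoinRoot.root q13) ^ (218769578:ℕ) = ((AdjoinRoot.root q13) ^ (109384789:ℕ)) ^ 2 from pow_mul (AdjoinRoot.root q13) 109384789 2, h4, ← map_pow]).trans
      (red _ _ ((36) * X ^ 9 + (-36) * X ^ 8 + (216) * X ^ 7 + (-708) * X ^ 6 + (2832) * X ^ 5 + (-10980) * X ^ 4 + (42460) * X ^ 3 + (-163876) * X ^ 2 + (631860) * X + (-2435844)) ((722301) * X ^ 10 + (827032) * X ^ 9 + (423413) * X ^ 8 + (-187659) * X ^ 7 + (723428) * X ^ 6 + (822930) * X ^ 5 + (1161495) * X ^ 4 + (1301198) * X ^ 3 + (40074) * X ^ 2 + (2012494) * X + (187372)) (by ring))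
  have h6 : (AdjoinRoot.root q13) ^ (218769579:ℕ) = (aeval (AdjoinRoot.root q13)) ((11) * X ^ 9 + X ^ 8 + (8) * X ^ 7 + (6) * X ^ 6 + (6) * X ^ 5 + (2) * X ^ 4 + (2) * X ^ 3 + (2) * X ^ 2 + (8) * X : ℤ[X]) :=
    (show (AdjoinRoot.root q13) ^ (218769579:ℕ) = (aeval (AdjoinRoot.root q13)) (((11) * X ^ 8 + X ^ 7 + (8) * X ^ 6 + (6) * X ^ 5 + (6) * X ^ 4 + (2) * X ^ 3 + (2) * X ^ 2 + (2) * X + (8)) * X : ℤ[X]) by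
        rw [show (AdjoinRoot.root q13) ^ (218769579:ℕ) = (AdjoinRoot.root q13) ^ (218769578:ℕ) * (AdjoinRoot.root q13) from pow_succ (AdjoinRoot.root q13) 218769578, h5, map_mul, aeval_X]).trans
      (red _ _ ((0)) ((0)) (by ring))
  have h7 : (AdjoinRoot.root q13) ^ (437539158:ℕ) = (aeval (AdjoinRoot.root q13)) ((7) * X ^ 10 + (4) * X ^ 9 + (9) * X ^ 8 + (7) * X ^ 7 + (7) * X ^ 6 + (5) * X ^ 5 + (12) * X ^ 4 + (7) * X ^ 3 + (4) * X + (4) : ℤ[X]) :=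
    (show (AdjoinRoot.root q13) ^ (437539158:ℕ) = (aeval (AdjoinRoot.root q13)) (((11) * X ^ 9 + X ^ 8 + (8) * X ^ 7 + (6) * X ^ 6 + (6) * X ^ 5 + (2) * X ^ 4 + (2) * X ^ 3 + (2) * X ^ 2 + (8) * X) ^ 2 : ℤ[X]) by
        rw [show (AdjoinRoot.root q13) ^ (437539158:ℕ) = ((AdjoinRoot.root q13) ^ (218769579:ℕ)) ^ 2 from pow_mul (AdjoinRoot.root q13) 218769579 2, h6, ← map_pow]).trans
      (red _ _ ((121) * X ^ 7 + (-583) * X ^ 6 + (2487) * X ^ 5 + (-9614) * X ^ 4 + (37009) * X ^ 3 + (-142402) * X ^ 2 + (548562) * X + (-2114571)) ((627083) * X ^ 10 + (717868) * X ^ 9 + (367630) * X ^ 8 + (-162940) * X ^ 7 + (627985) * X ^ 6 + (714463) * X ^ 5 + (1008183) * X ^ 4 + (1129673) * X ^ 3 + (34769) * X ^ 2 + (1747055) * X + (162659)) (by ring))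
  have h8 : (AdjoinRoot.root q13) ^ (875078316:ℕ) = (aeval (AdjoinRoot.root q13)) ((9) * X ^ 10 + (10) * X ^ 9 + (12) * X ^ 8 + (6) * X ^ 5 + (8) * X ^ 4 + X ^ 3 + (6) * X ^ 2 + (8) * X : ℤ[X]) :=
    (show (AdjoinRoot.root q13) ^ (875078316:ℕ) = (aeval (AdjoinRoot.root q13)) (((7) * X ^ 10 + (4) * X ^ 9 + (9) * X ^ 8 + (7) * X ^ 7 + (7) * X ^ 6 + (5) * X ^ 5 + (12) * X ^ 4 + (7) * X ^ 3 + (4) * X + (4)) ^ 2 : ℤ[X]) by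
        rw [show (AdjoinRoot.root q13) ^ (875078316:ℕ) = ((AdjoinRoot.root q13) ^ (437539158:ℕ)) ^ 2 from pow_mul (AdjoinRoot.root q13) 437539158 2, h7, ← map_pow]).trans
      (red _ _ ((49) * X ^ 9 + (-189) * X ^ 8 + (842) * X ^ 7 + (-3193) * X ^ 6 + (12368) * X ^ 5 + (-47552) * X ^ 4 + (183340) * X ^ 3 + (-706762) * X ^ 2 + (2724687) * X + (-10504127)) ((3114948) * X ^ 10 + (3566392) * X ^ 9 + (1825900) * X ^ 8 + (-809174) * X ^ 7 + (3119475) * X ^ 6 + (3548878) * X ^ 5 + (5008573) * X ^ 4 + (5611225) * X ^ 3 + (172892) * X ^ 2 + (8678518) * X + (808011)) (by ring))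
  exact h8

set_option maxHeartbeats 1600000 in
private lemma q13chain_5
    (h0 : (AdjoinRoot.root q13) ^ (875078316:ℕ) = (aeval (AdjoinRoot.root q13)) ((9) * X ^ 10 + (10) * X ^ 9 + (12) * X ^ 8 + (6) * X ^ 5 + (8) * X ^ 4 + X ^ 3 + (6) * X ^ 2 + (8) * X : ℤ[X])) :
    (AdjoinRoot.root q13) ^ (28002506156:ℕ) = (aeval (AdjoinRoot.root q13)) ((10) * X ^ 10 + (7) * X ^ 9 + (7) * X ^ 8 + (3) * X ^ 7 + (9) * X ^ 6 + (11) * X ^ 5 + (10) * X ^ 4 + (5) * X ^ 3 + (4) * X ^ 2 + (4) * X + (5) : ℤ[X]) := by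
  have hq0 : (aeval (AdjoinRoot.root q13)) (X ^ 11 + (5) * X ^ 10 + (5) * X ^ 9 + (2) * X ^ 8 + (5) * X ^ 6 + (6) * X ^ 5 + (8) * X ^ 4 + (7) * X ^ 3 + (3) * X ^ 2 + (11) * X + (1) : ℤ[X]) = 0 := by
    have h1 : (X ^ 11 + (5) * X ^ 10 + (5) * X ^ 9 + (2) * X ^ 8 + (5) * X ^ 6 + (6) * X ^ 5 + (8) * X ^ 4 + (7) * X ^ 3 + (3) * X ^ 2 + (11) * X + (1) : ℤ[X]).map (algebraMap ℤ (ZMod 13)) = q13 := by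
      simp only [q13, Polynomial.map_add, Polynomial.map_mul, Polynomial.map_pow,
        Polynomial.map_ofNat, Polynomial.map_X, Polynomial.map_one]
    rw [← aeval_map_algebraMap (ZMod 13), h1, AdjoinRoot.aeval_eq, AdjoinRoot.mk_self]
  have h13a : (aeval (AdjoinRoot.root q13)) ((13 : ℤ[X])) = 0 := by
    have hz : ((13:ℕ) : AdjoinRoot q13) = 0 := by
      rw [← map_natCast (algebraMap (ZMod 13) (AdjoinRoot q13)) 13,
        show ((13:ℕ) : ZMod 13) = 0 from by decide, map_zero]
    rw [map_ofNat]; exact_mod_cast hz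
  have red : ∀ a b c s : ℤ[X], a = c * (X ^ 11 + (5) * X ^ 10 + (5) * X ^ 9 + (2) * X ^ 8 + (5) * X ^ 6 + (6) * X ^ 5 + (8) * X ^ 4 + (7) * X ^ 3 + (3) * X ^ 2 + (11) * X + (1)) + 13 * s + b → (aeval (AdjoinRoot.root q13)) a = (aeval (AdjoinRoot.root q13)) b := by
    intro a b c s hcert
    rw [hcert, map_add, map_add, map_mul, map_mul, hq0, h13a, mul_zero, zero_mul, add_zero, zero_add]
  have h1 : (AdjoinRoot.root q13) ^ (875078317:ℕ) = (aeval (AdjoinRoot.root q13)) ((4) * X ^ 10 + (6) * X ^ 9 + (8) * X ^ 8 + (6) * X ^ 5 + (7) * X ^ 4 + (8) * X ^ 3 + (7) * X ^ 2 + (5) * X + (4) : ℤ[X]) :=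
    (show (AdjoinRoot.root q13) ^ (875078317:ℕ) = (aeval (AdjoinRoot.root q13)) (((9) * X ^ 10 + (10) * X ^ 9 + (12) * X ^ 8 + (6) * X ^ 5 + (8) * X ^ 4 + X ^ 3 + (6) * X ^ 2 + (8) * X) * X : ℤ[X]) by
        rw [show (AdjoinRoot.root q13) ^ (875078317:ℕ) = (AdjoinRoot.root q13) ^ (875078316:ℕ) * (AdjoinRoot.root q13) from pow_succ (AdjoinRoot.root q13) 875078316, h0, map_mul, aeval_X]).trans
      (red _ _ ((9)) ((-3) * X ^ 10 + (-3) * X ^ 9 + (-2) * X ^ 8 + (-3) * X ^ 6 + (-4) * X ^ 5 + (-6) * X ^ 4 + (-5) * X ^ 3 + (-2) * X ^ 2 + (-8) * X + (-1)) (by ring))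
  have h2 : (AdjoinRoot.root q13) ^ (1750156634:ℕ) = (aeval (AdjoinRoot.root q13)) ((11) * X ^ 10 + (6) * X ^ 9 + (5) * X ^ 8 + (6) * X ^ 7 + (5) * X ^ 6 + (3) * X ^ 5 + (2) * X ^ 4 + X ^ 3 + (4) * X ^ 2 + (11) * X + (6) : ℤ[X]) :=
    (show (AdjoinRoot.root q13) ^ (1750156634:ℕ) = (aeval (AdjoinRoot.root q13)) (((4) * X ^ 10 + (6) * X ^ 9 + (8) * X ^ 8 + (6) * X ^ 5 + (7) * X ^ 4 + (8) * X ^ 3 + (7) * X ^ 2 + (5) * X + (4)) ^ 2 : ℤ[X]) by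
        rw [show (AdjoinRoot.root q13) ^ (1750156634:ℕ) = ((AdjoinRoot.root q13) ^ (875078317:ℕ)) ^ 2 from pow_mul (AdjoinRoot.root q13) 875078317 2, h1, ← map_pow]).trans
      (red _ _ ((16) * X ^ 9 + (-32) * X ^ 8 + (180) * X ^ 7 + (-676) * X ^ 6 + (2608) * X ^ 5 + (-10052) * X ^ 4 + (38764) * X ^ 3 + (-149368) * X ^ 2 + (575832) * X + (-2219844)) ((658285) * X ^ 10 + (753686) * X ^ 9 + (385876) * X ^ 8 + (-171006) * X ^ 7 + (659245) * X ^ 6 + (749991) * X ^ 5 + (1058451) * X ^ 4 + (1185833) * X ^ 3 + (36525) * X ^ 2 + (1834037) * X + (170758)) (by ring))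
  have h3 : (AdjoinRoot.root q13) ^ (3500313268:ℕ) = (aeval (AdjoinRoot.root q13)) ((6) * X ^ 10 + (9) * X ^ 9 + (3) * X ^ 8 + (6) * X ^ 7 + (10) * X ^ 6 + X ^ 5 + (11) * X ^ 4 + (12) * X ^ 3 + (2) * X ^ 2 + (6) * X + (8) : ℤ[X]) :=
    (show (AdjoinRoot.root q13) ^ (3500313268:ℕ) = (aeval (AdjoinRoot.root q13)) (((11) * X ^ 10 + (6) * X ^ 9 + (5) * X ^ 8 + (6) * X ^ 7 + (5) * X ^ 6 + (3) * X ^ 5 + (2) * X ^ 4 + X ^ 3 + (4) * X ^ 2 + (11) * X + (6)) ^ 2 : ℤ[X]) by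
        rw [show (AdjoinRoot.root q13) ^ (3500313268:ℕ) = ((AdjoinRoot.root q13) ^ (1750156634:ℕ)) ^ 2 from pow_mul (AdjoinRoot.root q13) 1750156634 2, h2, ← map_pow]).trans
      (red _ _ ((121) * X ^ 9 + (-473) * X ^ 8 + (1906) * X ^ 7 + (-7215) * X ^ 6 + (27698) * X ^ 5 + (-106646) * X ^ 4 + (410975) * X ^ 3 + (-1584565) * X ^ 2 + (6108999) * X + (-23551266)) ((6984024) * X ^ 10 + (7996297) * X ^ 9 + (4093860) * X ^ 8 + (-1814178) * X ^ 7 + (6994203) * X ^ 6 + (7956933) * X ^ 5 + (11229754) * X ^ 4 + (12580861) * X ^ 3 + (387657) * X ^ 2 + (19458081) * X + (1811638)) (by ring))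
  have h4 : (AdjoinRoot.root q13) ^ (3500313269:ℕ) = (aeval (AdjoinRoot.root q13)) ((5) * X ^ 10 + (12) * X ^ 9 + (7) * X ^ 8 + (10) * X ^ 7 + (10) * X ^ 6 + X ^ 5 + (3) * X ^ 4 + (12) * X ^ 3 + X ^ 2 + (7) * X + (7) : ℤ[X]) :=
    (show (AdjoinRoot.root q13) ^ (3500313269:ℕ) = (aeval (AdjoinRoot.root q13)) (((6) * X ^ 10 + (9) * X ^ 9 + (3) * X ^ 8 + (6) * X ^ 7 + (10) * X ^ 6 + X ^ 5 + (11) * X ^ 4 + (12) * X ^ 3 + (2) * X ^ 2 + (6) * X + (8)) * X : ℤ[X]) by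
        rw [show (AdjoinRoot.root q13) ^ (3500313269:ℕ) = (AdjoinRoot.root q13) ^ (3500313268:ℕ) * (AdjoinRoot.root q13) from pow_succ (AdjoinRoot.root q13) 3500313268, h3, map_mul, aeval_X]).trans
      (red _ _ ((6)) ((-2) * X ^ 10 + (-3) * X ^ 9 + (-1) * X ^ 8 + (-3) * X ^ 6 + (-2) * X ^ 5 + (-3) * X ^ 4 + (-4) * X ^ 3 + (-1) * X ^ 2 + (-5) * X + (-1)) (by ring))
  have h5 : (AdjoinRoot.root q13) ^ (7000626538:ℕ) = (aeval (AdjoinRoot.root q13)) ((2) * X ^ 10 + (6) * X ^ 9 + (12) * X ^ 8 + (6) * X ^ 7 + (6) * X ^ 6 + (2) * X ^ 5 + X ^ 4 + (9) * X ^ 3 + (9) * X ^ 2 + (2) * X : ℤ[X]) :=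
    (show (AdjoinRoot.root q13) ^ (7000626538:ℕ) = (aeval (AdjoinRoot.root q13)) (((5) * X ^ 10 + (12) * X ^ 9 + (7) * X ^ 8 + (10) * X ^ 7 + (10) * X ^ 6 + X ^ 5 + (3) * X ^ 4 + (12) * X ^ 3 + X ^ 2 + (7) * X + (7)) ^ 2 : ℤ[X]) by
        rw [show (AdjoinRoot.root q13) ^ (7000626538:ℕ) = ((AdjoinRoot.root q13) ^ (3500313269:ℕ)) ^ 2 from pow_mul (AdjoinRoot.root q13) 3500313269 2, h4, ← map_pow]).trans
      (red _ _ ((25) * X ^ 9 + (-5) * X ^ 8 + (114) * X ^ 7 + (-327) * X ^ 6 + (1464) * X ^ 5 + (-5648) * X ^ 4 + (21743) * X ^ 3 + (-83737) * X ^ 2 + (322542) * X + (-1243479)) ((368748) * X ^ 10 + (422175) * X ^ 9 + (216164) * X ^ 8 + (-95789) * X ^ 7 + (369331) * X ^ 6 + (420170) * X ^ 5 + (592918) * X ^ 4 + (664328) * X ^ 3 + (20482) * X ^ 2 + (1027371) * X + (95656)) (by ring))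
  have h6 : (AdjoinRoot.root q13) ^ (7000626539:ℕ) = (aeval (AdjoinRoot.root q13)) ((9) * X ^ 10 + (2) * X ^ 9 + (2) * X ^ 8 + (6) * X ^ 7 + (5) * X ^ 6 + (2) * X ^ 5 + (6) * X ^ 4 + (8) * X ^ 3 + (9) * X ^ 2 + (4) * X + (11) : ℤ[X]) :=
    (show (AdjoinRoot.root q13) ^ (7000626539:ℕ) = (aeval (AdjoinRoot.root q13)) (((2) * X ^ 10 + (6) * X ^ 9 + (12) * X ^ 8 + (6) * X ^ 7 + (6) * X ^ 6 + (2) * X ^ 5 + X ^ 4 + (9) * X ^ 3 + (9) * X ^ 2 + (2) * X) * X : ℤ[X]) by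
        rw [show (AdjoinRoot.root q13) ^ (7000626539:ℕ) = (AdjoinRoot.root q13) ^ (7000626538:ℕ) * (AdjoinRoot.root q13) from pow_succ (AdjoinRoot.root q13) 7000626538, h5, map_mul, aeval_X]).trans
      (red _ _ ((2)) ((-1) * X ^ 10 + (-1) * X ^ 6 + (-1) * X ^ 5 + (-1) * X ^ 4 + (-1) * X ^ 3 + (-1) * X ^ 2 + (-2) * X + (-1)) (by ring))
  have h7 : (AdjoinRoot.root q13) ^ (14001253078:ℕ) = (aeval (AdjoinRoot.root q13)) ((12) * X ^ 10 + (11) * X ^ 8 + (5) * X ^ 7 + (6) * X ^ 6 + X ^ 5 + (12) * X ^ 3 + (2) * X + (4) : ℤ[X]) :=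
    (show (AdjoinRoot.root q13) ^ (14001253078:ℕ) = (aeval (AdjoinRoot.root q13)) (((9) * X ^ 10 + (2) * X ^ 9 + (2) * X ^ 8 + (6) * X ^ 7 + (5) * X ^ 6 + (2) * X ^ 5 + (6) * X ^ 4 + (8) * X ^ 3 + (9) * X ^ 2 + (4) * X + (11)) ^ 2 : ℤ[X]) by
        rw [show (AdjoinRoot.root q13) ^ (14001253078:ℕ) = ((AdjoinRoot.root q13) ^ (7000626539:ℕ)) ^ 2 from pow_mul (AdjoinRoot.root q13) 7000626539 2, h6, ← map_pow]).trans
      (red _ _ ((81) * X ^ 9 + (-369) * X ^ 8 + (1480) * X ^ 7 + (-5601) * X ^ 6 + (21461) * X ^ 5 + (-82585) * X ^ 4 + (318353) * X ^ 3 + (-1227360) * X ^ 2 + (4731982) * X + (-18242783)) ((5409842) * X ^ 10 + (6193925) * X ^ 9 + (3171064) * X ^ 8 + (-1405264) * X ^ 7 + (5417693) * X ^ 6 + (6163424) * X ^ 5 + (8698573) * X ^ 4 + (9745106) * X ^ 3 + (300317) * X ^ 2 + (15072209) * X + (1403300)) (by ring))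
  have h8 : (AdjoinRoot.root q13) ^ (28002506156:ℕ) = (aeval (AdjoinRoot.root q13)) ((10) * X ^ 10 + (7) * X ^ 9 + (7) * X ^ 8 + (3) * X ^ 7 + (9) * X ^ 6 + (11) * X ^ 5 + (10) * X ^ 4 + (5) * X ^ 3 + (4) * X ^ 2 + (4) * X + (5) : ℤ[X]) :=
    (show (AdjoinRoot.root q13) ^ (28002506156:ℕ) = (aeval (AdjoinRoot.root q13)) (((12) * X ^ 10 + (11) * X ^ 8 + (5) * X ^ 7 + (6) * X ^ 6 + X ^ 5 + (12) * X ^ 3 + (2) * X + (4)) ^ 2 : ℤ[X]) by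
        rw [show (AdjoinRoot.root q13) ^ (28002506156:ℕ) = ((AdjoinRoot.root q13) ^ (14001253078:ℕ)) ^ 2 from pow_mul (AdjoinRoot.root q13) 14001253078 2, h7, ← map_pow]).trans
      (red _ _ ((144) * X ^ 9 + (-720) * X ^ 8 + (3144) * X ^ 7 + (-12288) * X ^ 6 + (47425) * X ^ 5 + (-182559) * X ^ 4 + (703139) * X ^ 3 + (-2709932) * X ^ 2 + (10446457) * X + (-40272520)) ((11942731) * X ^ 10 + (13673422) * X ^ 9 + (7000576) * X ^ 8 + (-3102314) * X ^ 7 + (11959986) * X ^ 6 + (13606484) * X ^ 5 + (19202525) * X ^ 4 + (21513421) * X ^ 3 + (662805) * X ^ 2 + (33273175) * X + (3097887)) (by ring))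
  exact h8

set_option maxHeartbeats 1600000 in
private lemma q13chain_6
    (h0 : (AdjoinRoot.root q13) ^ (28002506156:ℕ) = (aeval (AdjoinRoot.root q13)) ((10) * X ^ 10 + (7) * X ^ 9 + (7) * X ^ 8 + (3) * X ^ 7 + (9) * X ^ 6 + (11) * X ^ 5 + (10) * X ^ 4 + (5) * X ^ 3 + (4) * X ^ 2 + (4) * X + (5) : ℤ[X])) :
    (AdjoinRoot.root q13) ^ (896080197018:ℕ) = (aeval (AdjoinRoot.root q13)) ((1) : ℤ[X]) := by
  have hq0 : (aeval (AdjoinRoot.root q13)) (X ^ 11 + (5) * X ^ 10 + (5) * X ^ 9 + (2) * X ^ 8 + (5) * X ^ 6 + (6) * X ^ 5 + (8) * X ^ 4 + (7) * X ^ 3 + (3) * X ^ 2 + (11) * X + (1) : ℤ[X]) = 0 := by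
    have h1 : (X ^ 11 + (5) * X ^ 10 + (5) * X ^ 9 + (2) * X ^ 8 + (5) * X ^ 6 + (6) * X ^ 5 + (8) * X ^ 4 + (7) * X ^ 3 + (3) * X ^ 2 + (11) * X + (1) : ℤ[X]).map (algebraMap ℤ (ZMod 13)) = q13 := by
      simp only [q13, Polynomial.map_add, Polynomial.map_mul, Polynomial.map_pow,
        Polynomial.map_ofNat, Polynomial.map_X, Polynomial.map_one]
    rw [← aeval_map_algebraMap (ZMod 13), h1, AdjoinRoot.aeval_eq, AdjoinRoot.mk_self]
  have h13a : (aeval (AdjoinRoot.root q13)) ((13 : ℤ[X])) = 0 := by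
    have hz : ((13:ℕ) : AdjoinRoot q13) = 0 := by
      rw [← map_natCast (algebraMap (ZMod 13) (AdjoinRoot q13)) 13,
        show ((13:ℕ) : ZMod 13) = 0 from by decide, map_zero]
    rw [map_ofNat]; exact_mod_cast hz
  have red : ∀ a b c s : ℤ[X], a = c * (X ^ 11 + (5) * X ^ 10 + (5) * X ^ 9 + (2) * X ^ 8 + (5) * X ^ 6 + (6) * X ^ 5 + (8) * X ^ 4 + (7) * X ^ 3 + (3) * X ^ 2 + (11) * X + (1)) + 13 * s + b → (aeval (AdjoinRoot.root q13)) a = (aeval (AdjoinRoot.root q13)) b := by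
    intro a b c s hcert
    rw [hcert, map_add, map_add, map_mul, map_mul, hq0, h13a, mul_zero, zero_mul, add_zero, zero_add]
  have h1 : (AdjoinRoot.root q13) ^ (56005012312:ℕ) = (aeval (AdjoinRoot.root q13)) ((9) * X ^ 9 + (2) * X ^ 7 + (4) * X ^ 6 + (4) * X ^ 5 + (3) * X ^ 4 + (7) * X ^ 3 + (2) * X ^ 2 + (11) * X + (3) : ℤ[X]) :=
    (show (AdjoinRoot.root q13) ^ (56005012312:ℕ) = (aeval (AdjoinRoot.root q13)) (((10) * X ^ 10 + (7) * X ^ 9 + (7) * X ^ 8 + (3) * X ^ 7 + (9) * X ^ 6 + (11) * X ^ 5 + (10) * X ^ 4 + (5) * X ^ 3 + (4) * X ^ 2 + (4) * X + (5)) ^ 2 : ℤ[X]) by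
        rw [show (AdjoinRoot.root q13) ^ (56005012312:ℕ) = ((AdjoinRoot.root q13) ^ (28002506156:ℕ)) ^ 2 from pow_mul (AdjoinRoot.root q13) 28002506156 2, h0, ← map_pow]).trans
      (red _ _ ((100) * X ^ 9 + (-360) * X ^ 8 + (1489) * X ^ 7 + (-5687) * X ^ 6 + (21981) * X ^ 5 + (-84560) * X ^ 4 + (325958) * X ^ 3 + (-1256589) * X ^ 2 + (4844393) * X + (-18675947)) ((5538266) * X ^ 10 + (6340948) * X ^ 9 + (3246394) * X ^ 8 + (-1438674) * X ^ 7 + (5546326) * X ^ 6 + (6309784) * X ^ 5 + (8905059) * X ^ 4 + (9976542) * X ^ 3 + (307397) * X ^ 2 + (15430081) * X + (1436613)) (by ring))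
  have h2 : (AdjoinRoot.root q13) ^ (56005012313:ℕ) = (aeval (AdjoinRoot.root q13)) ((9) * X ^ 10 + (2) * X ^ 8 + (4) * X ^ 7 + (4) * X ^ 6 + (3) * X ^ 5 + (7) * X ^ 4 + (2) * X ^ 3 + (11) * X ^ 2 + (3) * X : ℤ[X]) :=
    (show (AdjoinRoot.root q13) ^ (56005012313:ℕ) = (aeval (AdjoinRoot.root q13)) (((9) * X ^ 9 + (2) * X ^ 7 + (4) * X ^ 6 + (4) * X ^ 5 + (3) * X ^ 4 + (7) * X ^ 3 + (2) * X ^ 2 + (11) * X + (3)) * X : ℤ[X]) by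
        rw [show (AdjoinRoot.root q13) ^ (56005012313:ℕ) = (AdjoinRoot.root q13) ^ (56005012312:ℕ) * (AdjoinRoot.root q13) from pow_succ (AdjoinRoot.root q13) 56005012312, h1, map_mul, aeval_X]).trans
      (red _ _ ((0)) ((0)) (by ring))
  have h3 : (AdjoinRoot.root q13) ^ (112010024626:ℕ) = (aeval (AdjoinRoot.root q13)) ((4) * X ^ 10 + (4) * X ^ 9 + (8) * X ^ 8 + (8) * X ^ 7 + (5) * X ^ 6 + (3) * X ^ 5 + (7) * X ^ 4 + X ^ 3 + (3) * X ^ 2 + (1) : ℤ[X]) :=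
    (show (AdjoinRoot.root q13) ^ (112010024626:ℕ) = (aeval (AdjoinRoot.root q13)) (((9) * X ^ 10 + (2) * X ^ 8 + (4) * X ^ 7 + (4) * X ^ 6 + (3) * X ^ 5 + (7) * X ^ 4 + (2) * X ^ 3 + (11) * X ^ 2 + (3) * X) ^ 2 : ℤ[X]) by
        rw [show (AdjoinRoot.root q13) ^ (112010024626:ℕ) = ((AdjoinRoot.root q13) ^ (56005012313:ℕ)) ^ 2 from pow_mul (AdjoinRoot.root q13) 56005012313 2, h2, ← map_pow]).trans
      (red _ _ ((81) * X ^ 9 + (-405) * X ^ 8 + (1656) * X ^ 7 + (-6345) * X ^ 6 + (24331) * X ^ 5 + (-93577) * X ^ 4 + (360617) * X ^ 3 + (-1390280) * X ^ 2 + (5360197) * X + (-20664918)) ((6128129) * X ^ 10 + (7016300) * X ^ 9 + (3592094) * X ^ 8 + (-1591842) * X ^ 7 + (6136995) * X ^ 6 + (6981780) * X ^ 5 + (9853517) * X ^ 4 + (11038951) * X ^ 3 + (340221) * X ^ 2 + (17073377) * X + (1589609)) (by ring))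
  have h4 : (AdjoinRoot.root q13) ^ (112010024627:ℕ) = (aeval (AdjoinRoot.root q13)) ((10) * X ^ 10 + X ^ 9 + (5) * X ^ 7 + (9) * X ^ 6 + (9) * X ^ 5 + (8) * X ^ 4 + X ^ 3 + X ^ 2 + (9) * X + (9) : ℤ[X]) :=
    (show (AdjoinRoot.root q13) ^ (112010024627:ℕ) = (aeval (AdjoinRoot.root q13)) (((4) * X ^ 10 + (4) * X ^ 9 + (8) * X ^ 8 + (8) * X ^ 7 + (5) * X ^ 6 + (3) * X ^ 5 + (7) * X ^ 4 + X ^ 3 + (3) * X ^ 2 + (1)) * X : ℤ[X]) by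
        rw [show (AdjoinRoot.root q13) ^ (112010024627:ℕ) = (AdjoinRoot.root q13) ^ (112010024626:ℕ) * (AdjoinRoot.root q13) from pow_succ (AdjoinRoot.root q13) 112010024626, h3, map_mul, aeval_X]).trans
      (red _ _ ((4)) ((-2) * X ^ 10 + (-1) * X ^ 9 + (-2) * X ^ 6 + (-2) * X ^ 5 + (-3) * X ^ 4 + (-2) * X ^ 3 + (-1) * X ^ 2 + (-4) * X + (-1)) (by ring))
  have h5 : (AdjoinRoot.root q13) ^ (224020049254:ℕ) = (aeval (AdjoinRoot.root q13)) ((12) * X ^ 10 + (6) * X ^ 9 + (9) * X ^ 7 + (5) * X ^ 6 + (4) * X ^ 5 + (9) * X ^ 4 + (2) * X ^ 3 + (8) * X ^ 2 + (5) * X + (11) : ℤ[X]) :=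
    (show (AdjoinRoot.root q13) ^ (224020049254:ℕ) = (aeval (AdjoinRoot.root q13)) (((10) * X ^ 10 + X ^ 9 + (5) * X ^ 7 + (9) * X ^ 6 + (9) * X ^ 5 + (8) * X ^ 4 + X ^ 3 + X ^ 2 + (9) * X + (9)) ^ 2 : ℤ[X]) by
        rw [show (AdjoinRoot.root q13) ^ (224020049254:ℕ) = ((AdjoinRoot.root q13) ^ (112010024627:ℕ)) ^ 2 from pow_mul (AdjoinRoot.root q13) 112010024627 2, h4, ← map_pow]).trans
      (red _ _ ((100) * X ^ 9 + (-480) * X ^ 8 + (1901) * X ^ 7 + (-7205) * X ^ 6 + (27670) * X ^ 5 + (-106429) * X ^ 4 + (410208) * X ^ 3 + (-1581534) * X ^ 2 + (6097440) * X + (-23506790)) ((6970849) * X ^ 10 + (7981180) * X ^ 9 + (4086086) * X ^ 8 + (-1810772) * X ^ 7 + (6980968) * X ^ 6 + (7941899) * X ^ 5 + (11208549) * X ^ 4 + (12557070) * X ^ 3 + (386935) * X ^ 2 + (19421339) * X + (1808220)) (by ring))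
  have h6 : (AdjoinRoot.root q13) ^ (448040098508:ℕ) = (aeval (AdjoinRoot.root q13)) (X ^ 10 + (5) * X ^ 9 + (5) * X ^ 8 + (2) * X ^ 7 + (5) * X ^ 5 + (6) * X ^ 4 + (8) * X ^ 3 + (7) * X ^ 2 + (3) * X + (11) : ℤ[X]) :=
    (show (AdjoinRoot.root q13) ^ (448040098508:ℕ) = (aeval (AdjoinRoot.root q13)) (((12) * X ^ 10 + (6) * X ^ 9 + (9) * X ^ 7 + (5) * X ^ 6 + (4) * X ^ 5 + (9) * X ^ 4 + (2) * X ^ 3 + (8) * X ^ 2 + (5) * X + (11)) ^ 2 : ℤ[X]) by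
        rw [show (AdjoinRoot.root q13) ^ (448040098508:ℕ) = ((AdjoinRoot.root q13) ^ (224020049254:ℕ)) ^ 2 from pow_mul (AdjoinRoot.root q13) 224020049254 2, h5, ← map_pow]).trans
      (red _ _ ((144) * X ^ 9 + (-576) * X ^ 8 + (2196) * X ^ 7 + (-8172) * X ^ 6 + (31260) * X ^ 5 + (-120396) * X ^ 4 + (464385) * X ^ 3 + (-1790895) * X ^ 2 + (6904939) * X + (-26619808)) ((7893936) * X ^ 10 + (9038208) * X ^ 9 + (4627179) * X ^ 8 + (-2050567) * X ^ 7 + (7905513) * X ^ 6 + (8993519) * X ^ 5 + (12693001) * X ^ 4 + (14219955) * X ^ 3 + (438168) * X ^ 2 + (21993312) * X + (2047686)) (by ring))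
  have h7 : (AdjoinRoot.root q13) ^ (448040098509:ℕ) = (aeval (AdjoinRoot.root q13)) ((12) : ℤ[X]) :=
    (show (AdjoinRoot.root q13) ^ (448040098509:ℕ) = (aeval (AdjoinRoot.root q13)) ((X ^ 10 + (5) * X ^ 9 + (5) * X ^ 8 + (2) * X ^ 7 + (5) * X ^ 5 + (6) * X ^ 4 + (8) * X ^ 3 + (7) * X ^ 2 + (3) * X + (11)) * X : ℤ[X]) by
        rw [show (AdjoinRoot.root q13) ^ (448040098509:ℕ) = (AdjoinRoot.root q13) ^ (448040098508:ℕ) * (AdjoinRoot.root q13) from pow_succ (AdjoinRoot.root q13) 448040098508, h6, map_mul, aeval_X]).trans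
      (red _ _ ((1)) ((-1)) (by ring))
  have h8 : (AdjoinRoot.root q13) ^ (896080197018:ℕ) = (aeval (AdjoinRoot.root q13)) ((1) : ℤ[X]) :=
    (show (AdjoinRoot.root q13) ^ (896080197018:ℕ) = (aeval (AdjoinRoot.root q13)) (((12)) ^ 2 : ℤ[X]) by
        rw [show (AdjoinRoot.root q13) ^ (896080197018:ℕ) = ((AdjoinRoot.root q13) ^ (448040098509:ℕ)) ^ 2 from pow_mul (AdjoinRoot.root q13) 448040098509 2, h7, ← map_pow]).trans
      (red _ _ ((0)) ((11)) (by ring))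
  exact h8

set_option maxHeartbeats 1600000 in
private lemma q13chain_7
    (h0 : (AdjoinRoot.root q13) ^ (896080197018:ℕ) = (aeval (AdjoinRoot.root q13)) ((1) : ℤ[X])) :
    (AdjoinRoot.root q13) ^ (1792160394037:ℕ) = (aeval (AdjoinRoot.root q13)) (X : ℤ[X]) := by
  have hq0 : (aeval (AdjoinRoot.root q13)) (X ^ 11 + (5) * X ^ 10 + (5) * X ^ 9 + (2) * X ^ 8 + (5) * X ^ 6 + (6) * X ^ 5 + (8) * X ^ 4 + (7) * X ^ 3 + (3) * X ^ 2 + (11) * X + (1) : ℤ[X]) = 0 := by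
    have h1 : (X ^ 11 + (5) * X ^ 10 + (5) * X ^ 9 + (2) * X ^ 8 + (5) * X ^ 6 + (6) * X ^ 5 + (8) * X ^ 4 + (7) * X ^ 3 + (3) * X ^ 2 + (11) * X + (1) : ℤ[X]).map (algebraMap ℤ (ZMod 13)) = q13 := by
      simp only [q13, Polynomial.map_add, Polynomial.map_mul, Polynomial.map_pow,
        Polynomial.map_ofNat, Polynomial.map_X, Polynomial.map_one]
    rw [← aeval_map_algebraMap (ZMod 13), h1, AdjoinRoot.aeval_eq, AdjoinRoot.mk_self]
  have h13a : (aeval (AdjoinRoot.root q13)) ((13 : ℤ[X])) = 0 := by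
    have hz : ((13:ℕ) : AdjoinRoot q13) = 0 := by
      rw [← map_natCast (algebraMap (ZMod 13) (AdjoinRoot q13)) 13,
        show ((13:ℕ) : ZMod 13) = 0 from by decide, map_zero]
    rw [map_ofNat]; exact_mod_cast hz
  have red : ∀ a b c s : ℤ[X], a = c * (X ^ 11 + (5) * X ^ 10 + (5) * X ^ 9 + (2) * X ^ 8 + (5) * X ^ 6 + (6) * X ^ 5 + (8) * X ^ 4 + (7) * X ^ 3 + (3) * X ^ 2 + (11) * X + (1)) + 13 * s + b → (aeval (AdjoinRoot.root q13)) a = (aeval (AdjoinRoot.root q13)) b := by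
    intro a b c s hcert
    rw [hcert, map_add, map_add, map_mul, map_mul, hq0, h13a, mul_zero, zero_mul, add_zero, zero_add]
  have h1 : (AdjoinRoot.root q13) ^ (1792160394036:ℕ) = (aeval (AdjoinRoot.root q13)) ((1) : ℤ[X]) :=
    (show (AdjoinRoot.root q13) ^ (1792160394036:ℕ) = (aeval (AdjoinRoot.root q13)) (((1)) ^ 2 : ℤ[X]) by
        rw [show (AdjoinRoot.root q13) ^ (1792160394036:ℕ) = ((AdjoinRoot.root q13) ^ (896080197018:ℕ)) ^ 2 from pow_mul (AdjoinRoot.root q13) 896080197018 2, h0, ← map_pow]).trans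
      (red _ _ ((0)) ((0)) (by ring))
  have h2 : (AdjoinRoot.root q13) ^ (1792160394037:ℕ) = (aeval (AdjoinRoot.root q13)) (X : ℤ[X]) :=
    (show (AdjoinRoot.root q13) ^ (1792160394037:ℕ) = (aeval (AdjoinRoot.root q13)) (((1)) * X : ℤ[X]) by
        rw [show (AdjoinRoot.root q13) ^ (1792160394037:ℕ) = (AdjoinRoot.root q13) ^ (1792160394036:ℕ) * (AdjoinRoot.root q13) from pow_succ (AdjoinRoot.root q13) 1792160394036, h1, map_mul, aeval_X]).trans
      (red _ _ ((0)) ((0)) (by ring))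
  exact h2

private lemma q13_dvd : q13 ∣ (X : (ZMod 13)[X]) ^ (13 ^ 11) - X := by
  rw [← AdjoinRoot.mk_eq_zero, map_sub, map_pow, AdjoinRoot.mk_X]
  have h0 : (AdjoinRoot.root q13) ^ (1:ℕ) = (aeval (AdjoinRoot.root q13)) (X : ℤ[X]) := by simp
  have hc0 := q13chain_0 h0
  have hc1 := q13chain_1 hc0
  have hc2 := q13chain_2 hc1
  have hc3 := q13chain_3 hc2
  have hc4 := q13chain_4 hc3
  have hc5 := q13chain_5 hc4
  have hc6 := q13chain_6 hc5
  have hc7 := q13chain_7 hc6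
  rw [show (13:ℕ) ^ 11 = 1792160394037 from by norm_num, hc7, aeval_X, sub_self]
private lemma q13_irred : Irreducible q13 := by
  have hm := q13_monic
  have hnu : ¬ IsUnit q13 := by
    intro h
    have h0 := natDegree_eq_zero_of_isUnit h
    rw [q13_natDegree] at h0
    exact absurd h0 (by norm_num)
  obtain ⟨π₀, hπ₀irr, hπ₀dvd⟩ := WfDvdMonoid.exists_irreducible_factor hnu q13_ne_zero
  classical
  set π := normalize π₀ with hπdef
  have hπirr : Irreducible π := (associated_normalize π₀).irreducible hπ₀irr
  have hπdvd : π ∣ q13 := (normalize_dvd_iff).mpr hπ₀dvd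
  have hπm : π.Monic := monic_normalize hπ₀irr.ne_zero
  have hd_le : π.natDegree ≤ 11 := by
    have := natDegree_le_of_dvd hπdvd q13_ne_zero
    rwa [q13_natDegree] at this
  have hd_pos : 0 < π.natDegree := hπirr.natDegree_pos
  have hd_ne1 : π.natDegree ≠ 1 := by
    intro h1
    have hπeq : π = X + C (π.coeff 0) := hπm.eq_X_add_C h1
    obtain ⟨w, hw⟩ := hπdvd
    set c := π.coeff 0 with hc
    apply q13_no_root (-c)
    rw [hw, eval_mul, hπeq, eval_add, eval_X, eval_C, neg_add_cancel, zero_mul]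
  -- the quotient field
  haveI : Fact (Irreducible π) := ⟨hπirr⟩
  haveI : CharP (AdjoinRoot π) 13 :=
    charP_of_injective_algebraMap (algebraMap (ZMod 13) (AdjoinRoot π)).injective 13
  haveI : ExpChar (AdjoinRoot π) 13 := ExpChar.prime (by norm_num)
  let pb := AdjoinRoot.powerBasis hπirr.ne_zero
  haveI : Fintype (AdjoinRoot π) := Module.fintypeOfFintype pb.basis
  have hcard : Fintype.card (AdjoinRoot π) = 13 ^ π.natDegree := by
    rw [Module.card_fintype pb.basis, ZMod.card, Fintype.card_fin, AdjoinRoot.powerBasis_dim]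
  have hα : (AdjoinRoot.root π) ^ ((13:ℕ) ^ 11) = AdjoinRoot.root π := by
    have hdvd2 : π ∣ (X : (ZMod 13)[X]) ^ (13 ^ 11) - X := dvd_trans hπdvd q13_dvd
    have h0 : AdjoinRoot.mk π ((X : (ZMod 13)[X]) ^ (13 ^ 11) - X) = 0 :=
      AdjoinRoot.mk_eq_zero.mpr hdvd2
    rw [map_sub, map_pow, AdjoinRoot.mk_X, sub_eq_zero] at h0
    exact h0
  have hall : ∀ x : AdjoinRoot π, x ^ ((13:ℕ) ^ 11) = x := by
    intro x
    have hx : x ∈ Algebra.adjoin (ZMod 13) ({AdjoinRoot.root π} : Set (AdjoinRoot π)) := by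
      rw [AdjoinRoot.adjoinRoot_eq_top]; trivial
    refine Algebra.adjoin_induction ?_ ?_ ?_ ?_ hx
    · intro y hy
      rw [Set.mem_singleton_iff] at hy
      rw [hy]; exact hα
    · intro r
      rw [← map_pow, ZMod.pow_card_pow]
    · intro a b _ _ ha hb
      rw [add_pow_char_pow, ha, hb]
    · intro a b _ _ ha hb
      rw [mul_pow, ha, hb]
  obtain ⟨ζ, hζ⟩ := IsCyclic.exists_generator (α := (AdjoinRoot π)ˣ)
  have horder : orderOf ζ = 13 ^ π.natDegree - 1 := by
    rw [orderOf_eq_card_of_forall_mem_zpowers hζ, Nat.card_eq_fintype_card,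
      Fintype.card_units, hcard]
  have hζpow : ζ ^ ((13:ℕ) ^ 11) = ζ := by
    have hv := hall (ζ : AdjoinRoot π)
    ext
    rw [Units.val_pow_eq_pow_val]
    exact hv
  have hone : ζ ^ ((13:ℕ) ^ 11 - 1) = 1 := by
    have hℕ : (13:ℕ) ^ 11 - 1 + 1 = 13 ^ 11 := by
      have : 1 ≤ (13:ℕ) ^ 11 := Nat.one_le_pow _ _ (by norm_num)
      omega
    have hmul : ζ ^ ((13:ℕ) ^ 11 - 1) * ζ = 1 * ζ := by
      rw [one_mul, ← pow_succ, hℕ, hζpow]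
    exact mul_right_cancel hmul
  have hdvdord : orderOf ζ ∣ (13:ℕ) ^ 11 - 1 := orderOf_dvd_of_pow_eq_one hone
  rw [horder] at hdvdord
  have hd : π.natDegree = 11 := by
    generalize hg : π.natDegree = d at hd_pos hd_le hd_ne1 hdvdord
    interval_cases d <;>
      first
        | rfl
        | (exact absurd rfl hd_ne1)
        | (exact absurd hdvdord (by norm_num))
  obtain ⟨w, hw⟩ := hπdvd
  have hwm : w.Monic := hπm.of_mul_monic_left (hw ▸ hm)
  have hwdeg : w.natDegree = 0 := by
    have hnd : q13.natDegree = π.natDegree + w.natDegree := by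
      rw [hw, natDegree_mul hπirr.ne_zero hwm.ne_zero]
    rw [q13_natDegree, hd] at hnd
    omega
  have hw1 : w = 1 := hwm.natDegree_eq_zero.mp hwdeg
  rw [hw, hw1, mul_one]
  exact hπirr

private noncomputable def fz : ℤ[X] :=
  X ^ 12 - 2 * X ^ 11 + 9 * X ^ 10 - 20 * X ^ 9 + 38 * X ^ 8 - 73 * X ^ 7 + 101 * X ^ 6 -
    86 * X ^ 5 + 55 * X ^ 4 - 46 * X ^ 3 + 42 * X ^ 2 - 24 * X + 6

private lemma fz_monic : fz.Monic := by unfold fz; monicity!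

private lemma fz_deg : fz.natDegree = 12 := by unfold fz; compute_degree!

private lemma fz_map13 : fz.map (algebraMap ℤ (ZMod 13)) = (X + C 6) * q13 := by
  have h13 : (13 : (ZMod 13)[X]) = 0 := by
    rw [show (13 : (ZMod 13)[X]) = ((13:ℕ) : (ZMod 13)[X]) from by norm_cast,
      ← Polynomial.C_eq_natCast, show ((13:ℕ) : ZMod 13) = 0 from by decide, map_zero]
  have key : fz = (X + 6) *
      (X ^ 11 + 5 * X ^ 10 + 5 * X ^ 9 + 2 * X ^ 8 + 5 * X ^ 6 + 6 * X ^ 5 +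
        8 * X ^ 4 + 7 * X ^ 3 + 3 * X ^ 2 + 11 * X + 1) +
      13 * (-(1) * X ^ 11 + (-2) * X ^ 10 + (-4) * X ^ 9 + (2) * X ^ 8 + (-6) * X ^ 7 +
        (5) * X ^ 6 + (-10) * X ^ 5 + (-7) * X ^ 3 + (1) * X ^ 2 + (-7) * X) := by
    unfold fz; ring
  rw [key]
  simp only [Polynomial.map_add, Polynomial.map_mul, Polynomial.map_pow, Polynomial.map_ofNat,
    Polynomial.map_X, Polynomial.map_one, Polynomial.map_neg]
  rw [h13, zero_mul, add_zero, q13]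
  rw [show ((6:(ZMod 13)[X])) = C 6 from (map_ofNat Polynomial.C 6).symm]
private lemma fz_noroot (r : ℤ) : fz.eval r ≠ 0 := by
  intro hr
  have hre : r ^ 12 - 2 * r ^ 11 + 9 * r ^ 10 - 20 * r ^ 9 + 38 * r ^ 8 - 73 * r ^ 7 +
      101 * r ^ 6 - 86 * r ^ 5 + 55 * r ^ 4 - 46 * r ^ 3 + 42 * r ^ 2 - 24 * r + 6 = 0 := by
    simpa [fz] using hr
  have hdv : r ∣ 6 :=
    ⟨-(r ^ 11 - 2 * r ^ 10 + 9 * r ^ 9 - 20 * r ^ 8 + 38 * r ^ 7 - 73 * r ^ 6 + 101 * r ^ 5 -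
      86 * r ^ 4 + 55 * r ^ 3 - 46 * r ^ 2 + 42 * r - 24), by linear_combination hre⟩
  have h1 : r ≤ 6 := Int.le_of_dvd (by norm_num) hdv
  have h2 : -6 ≤ r := by
    have := Int.le_of_dvd (by norm_num) ((neg_dvd).mpr hdv)
    omega
  interval_cases r <;> norm_num at hre

private lemma fz_irred : Irreducible fz := by
  have key : ∀ g h : ℤ[X], g.Monic → h.Monic → fz = g * h → IsUnit g ∨ IsUnit h := by
    intro g h hg hh hgh
    have hsum : g.natDegree + h.natDegree = 12 := by
      rw [← fz_deg, hgh, natDegree_mul hg.ne_zero hh.ne_zero]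
    have lin : ∀ g₁ h₁ : ℤ[X], g₁.Monic → fz = g₁ * h₁ → g₁.natDegree = 1 → False := by
      intro g₁ h₁ hg₁ heq hd1
      have hgeq : g₁ = X + C (g₁.coeff 0) := hg₁.eq_X_add_C hd1
      set c := g₁.coeff 0 with hc
      apply fz_noroot (-c)
      rw [heq, eval_mul, hgeq, eval_add, eval_X, eval_C, neg_add_cancel, zero_mul]
    by_cases hg0 : g.natDegree = 0
    · exact Or.inl (by rw [hg.natDegree_eq_zero.mp hg0]; exact isUnit_one)
    by_cases hh0 : h.natDegree = 0
    · exact Or.inr (by rw [hh.natDegree_eq_zero.mp hh0]; exact isUnit_one)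
    exfalso
    by_cases hg1 : g.natDegree = 1
    · exact lin g h hg hgh hg1
    by_cases hh1 : h.natDegree = 1
    · exact lin h g hh (by rw [hgh, mul_comm]) hh1
    -- now 2 ≤ deg g, deg h ≤ 10
    have hb1 : 2 ≤ g.natDegree := by omega
    have hb2 : g.natDegree ≤ 10 := by omega
    have hmapeq : (g.map (algebraMap ℤ (ZMod 13))) * (h.map (algebraMap ℤ (ZMod 13))) =
        (X + C 6) * q13 := by
      rw [← Polynomial.map_mul, ← hgh, fz_map13]
    have hgdvd : g.map (algebraMap ℤ (ZMod 13)) ∣ (X + C 6) * q13 := ⟨_, hmapeq.symm⟩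
    have hdeg_g : (g.map (algebraMap ℤ (ZMod 13))).natDegree = g.natDegree :=
      hg.natDegree_map _
    by_cases hq : q13 ∣ g.map (algebraMap ℤ (ZMod 13))
    · have h11 := natDegree_le_of_dvd hq (hg.map (algebraMap ℤ (ZMod 13))).ne_zero
      rw [hdeg_g, q13_natDegree] at h11
      omega
    · have hco : IsCoprime q13 (g.map (algebraMap ℤ (ZMod 13))) :=
        q13_irred.coprime_iff_not_dvd.mpr hq
      have hdl : g.map (algebraMap ℤ (ZMod 13)) ∣ (X + C 6) :=
        hco.symm.dvd_of_dvd_mul_right hgdvd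
      have hle := natDegree_le_of_dvd hdl (X_add_C_ne_zero (6 : ZMod 13))
      rw [hdeg_g, natDegree_X_add_C] at hle
      omega
  constructor
  · intro h
    have h0 := natDegree_eq_zero_of_isUnit h
    rw [fz_deg] at h0
    exact absurd h0 (by norm_num)
  · intro g h hgh
    have hlc : g.leadingCoeff * h.leadingCoeff = 1 := by
      rw [← leadingCoeff_mul, ← hgh]; exact fz_monic
    rcases Int.mul_eq_one_iff_eq_one_or_neg_one.mp hlc with ⟨e1, e2⟩ | ⟨e1, e2⟩
    · exact key g h e1 e2 hgh
    · have hres := key (-g) (-h)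
        (by rw [Monic, leadingCoeff_neg, e1, neg_neg])
        (by rw [Monic, leadingCoeff_neg, e2, neg_neg])
        (by rw [neg_mul_neg]; exact hgh)
      rcases hres with hu | hu
      · exact Or.inl ((IsUnit.neg_iff g).mp hu)
      · exact Or.inr ((IsUnit.neg_iff h).mp hu)


/-- The degree-12 polynomial defining the subfield K is irreducible over ℚ. -/
theorem stmt_8 :
    Irreducible (X ^ 12 - 2 * X ^ 11 + 9 * X ^ 10 - 20 * X ^ 9 + 38 * X ^ 8 -
      73 * X ^ 7 + 101 * X ^ 6 - 86 * X ^ 5 + 55 * X ^ 4 - 46 * X ^ 3 +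
      42 * X ^ 2 - 24 * X + 6 : ℚ[X]) := by
  have hmap : fz.map (algebraMap ℤ ℚ) =
      (X ^ 12 - 2 * X ^ 11 + 9 * X ^ 10 - 20 * X ^ 9 + 38 * X ^ 8 -
        73 * X ^ 7 + 101 * X ^ 6 - 86 * X ^ 5 + 55 * X ^ 4 - 46 * X ^ 3 +
        42 * X ^ 2 - 24 * X + 6 : ℚ[X]) := by
    simp only [fz, Polynomial.map_add, Polynomial.map_sub, Polynomial.map_mul,
      Polynomial.map_pow, Polynomial.map_ofNat, Polynomial.map_X]
  rw [← hmap]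
  exact (fz_monic.irreducible_iff_irreducible_map_fraction_map).mp fz_irred
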